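/- arXiv:0803.0074 — 2 statements merged into one kernel-verified Lean document; each statement's English description precedes it below -/
import Mathlib

section
/- Let n ≥ 1 and let G be a holomorphic function on a neighborhood of 0 in ℂⁿ × ℂ such that Im G(z, |z|²) = 0 for all z ∈ ℂⁿ sufficiently close to 0. Then G is independent of z near 0, i.e. G(z,w) = G(0,w) for (z,w) near 0, and G(0,x) is real for all real x near 0. -/
open Metric Complex Set Asymptotics

lemma im_zero_of_boundary {f : ℂ → ℂ} {r R : ℝ} (hr : 0 < r) (hrR : r < R)
    (hf : DifferentiableOn ℂ f (ball 0 R))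
    (hb : ∀ ζ ∈ sphere (0:ℂ) r, (f ζ).im = 0) :
    ∀ ζ ∈ closedBall (0:ℂ) r, (f ζ).im = 0 := by
  have hsub : closedBall (0:ℂ) r ⊆ ball 0 R := closedBall_subset_ball hrR
  have key : ∀ c : ℂ, c = I ∨ c = -I → ∀ ζ ∈ closedBall (0:ℂ) r,
      Real.exp ((c * f ζ).re) ≤ 1 := by
    intro c hc ζ hζ
    have hd : DiffContOnCl ℂ (fun ζ => Complex.exp (c * f ζ)) (ball 0 r) := by
      apply DifferentiableOn.diffContOnCl
      rw [closure_ball (0:ℂ) hr.ne']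
      exact (((hf.mono hsub).const_mul c).cexp)
    have hb' : ∀ ζ ∈ frontier (ball (0:ℂ) r), ‖Complex.exp (c * f ζ)‖ ≤ 1 := by
      intro ζ hζ
      rw [frontier_ball (0:ℂ) hr.ne'] at hζ
      rw [Complex.norm_exp]
      have him := hb ζ hζ
      rcases hc with rfl | rfl <;>
        simp [Complex.mul_re, him, Real.exp_le_one_iff]
    have := Complex.norm_le_of_forall_mem_frontier_norm_le isBounded_ball hd hb'
      (z := ζ) (by rwa [closure_ball (0:ℂ) hr.ne'])
    rwa [Complex.norm_exp] at this
  intro ζ hζ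
  have h1 := key I (Or.inl rfl) ζ hζ
  have h2 := key (-I) (Or.inr rfl) ζ hζ
  rw [Real.exp_le_one_iff] at h1 h2
  simp [Complex.mul_re] at h1 h2
  linarith

lemma const_of_real_boundary {f : ℂ → ℂ} {r R : ℝ} (hr : 0 < r) (hrR : r < R)
    (hf : DifferentiableOn ℂ f (ball 0 R))
    (hb : ∀ ζ ∈ sphere (0:ℂ) r, (f ζ).im = 0) :
    ∀ ζ ∈ ball (0:ℂ) r, f ζ = f 0 := by
  have him : ∀ ζ ∈ closedBall (0:ℂ) r, (f ζ).im = 0 :=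
    im_zero_of_boundary hr hrR hf hb
  have han : AnalyticOnNhd ℂ f (ball 0 r) :=
    (hf.mono (ball_subset_ball hrR.le)).analyticOnNhd isOpen_ball
  rcases han.is_constant_or_isOpen (convex_ball (0:ℂ) r).isPreconnected with ⟨w, hw⟩ | hopen
  · intro ζ hζ
    rw [hw ζ hζ, hw 0 (mem_ball_self hr)]
  · exfalso
    have ho := hopen (ball 0 r) subset_rfl isOpen_ball
    have hmem : f 0 ∈ f '' ball 0 r := ⟨0, mem_ball_self hr, rfl⟩
    rcases Metric.isOpen_iff.1 ho _ hmem with ⟨δ, hδ, hball⟩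
    have : f 0 + (δ/2) * I ∈ f '' ball 0 r := by
      apply hball
      rw [mem_ball]
      simp only [dist_eq, add_sub_cancel_left]
      rw [norm_mul, Complex.norm_I, mul_one, norm_div, Complex.norm_real, Complex.norm_two, Real.norm_eq_abs, abs_of_pos hδ]
      linarith
    rcases this with ⟨ζ, hζ, hfζ⟩
    have h1 : (f ζ).im = 0 := him ζ (ball_subset_closedBall hζ)
    have h2 : (f 0).im = 0 := him 0 (mem_closedBall_self hr.le)
    rw [hfζ] at h1
    simp [h2] at h1
    linarith

lemma conj_reflect_diff {f : ℂ → ℂ} {r : ℝ}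
    (hf : DifferentiableOn ℂ f (ball 0 r)) :
    DifferentiableOn ℂ (fun w => (starRingEnd ℂ) (f ((starRingEnd ℂ) w))) (ball 0 r) := by
  intro w hw
  have hw' : (starRingEnd ℂ) w ∈ ball (0:ℂ) r := by
    simpa [mem_ball, Complex.dist_eq] using hw
  have hfd : DifferentiableAt ℂ f ((starRingEnd ℂ) w) :=
    (hf.differentiableAt (isOpen_ball.mem_nhds hw'))
  obtain ⟨f', hf'⟩ := hfd
  have hf'' : HasDerivAt f (f' 1) ((starRingEnd ℂ) w) := hf'.hasDerivAt
  rw [hasDerivAt_iff_isLittleO] at hf''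
  have hconj : Filter.Tendsto (starRingEnd ℂ) (nhds w) (nhds ((starRingEnd ℂ) w)) :=
    (Complex.continuous_conj.tendsto w)
  have h2 := hf''.comp_tendsto hconj
  have h3 : HasDerivAt (fun w => (starRingEnd ℂ) (f ((starRingEnd ℂ) w)))
      ((starRingEnd ℂ) (f' 1)) w := by
    rw [hasDerivAt_iff_isLittleO]
    rw [isLittleO_iff] at h2 ⊢
    intro c hc
    filter_upwards [h2 hc] with x hx
    calc ‖(starRingEnd ℂ) (f ((starRingEnd ℂ) x)) - (starRingEnd ℂ) (f ((starRingEnd ℂ) w))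
          - (x - w) • (starRingEnd ℂ) (f' 1)‖
        = ‖(starRingEnd ℂ) (f ((starRingEnd ℂ) x) - f ((starRingEnd ℂ) w)
          - ((starRingEnd ℂ) x - (starRingEnd ℂ) w) • f' 1)‖ := by
          rw [map_sub, map_sub, smul_eq_mul, smul_eq_mul, map_mul, map_sub,
            Complex.conj_conj, Complex.conj_conj]
      _ = ‖f ((starRingEnd ℂ) x) - f ((starRingEnd ℂ) w)
          - ((starRingEnd ℂ) x - (starRingEnd ℂ) w) • f' 1‖ := RCLike.norm_conj _
      _ ≤ c * ‖(starRingEnd ℂ) x - (starRingEnd ℂ) w‖ := hx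
      _ = c * ‖x - w‖ := by rw [← map_sub, RCLike.norm_conj]
  exact h3.differentiableAt.differentiableWithinAt

lemma freq_zero {a b : ℝ} (hab : a < b) {F : ℂ → ℂ}
    (h : ∀ x : ℝ, a < x → x < b → F x = 0) :
    ∃ᶠ w in nhdsWithin (((a+b)/2 : ℝ) : ℂ) {(((a+b)/2 : ℝ) : ℂ)}ᶜ, F w = 0 := by
  set c : ℝ := (a+b)/2 with hc
  set u : ℕ → ℂ := fun k => ((c + (b-a)/4 * (1/(k+1)) : ℝ) : ℂ) with hu
  have h1 : Filter.Tendsto (fun k : ℕ => c + (b-a)/4 * (1/((k:ℝ)+1))) Filter.atTop (nhds c) := by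
    have h0 := tendsto_one_div_add_atTop_nhds_zero_nat (𝕜 := ℝ)
    have h2 := h0.const_mul ((b-a)/4)
    have h3 := h2.const_add c
    simpa using h3
  have h2 : Filter.Tendsto u Filter.atTop (nhds ((c:ℝ):ℂ)) :=
    (Complex.continuous_ofReal.tendsto c).comp h1
  have hpos : ∀ k : ℕ, 0 < 1/((k:ℝ)+1) := by
    intro k; positivity
  have hle : ∀ k : ℕ, 1/((k:ℝ)+1) ≤ 1 := by
    intro k
    rw [div_le_one (by positivity)]
    simp [Nat.cast_nonneg]
  have h3 : Filter.Tendsto u Filter.atTop (nhdsWithin ((c:ℝ):ℂ) {((c:ℝ):ℂ)}ᶜ) := by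
    apply tendsto_nhdsWithin_of_tendsto_nhds_of_eventually_within _ h2
    apply Filter.Eventually.of_forall
    intro k
    simp only [Set.mem_compl_iff, Set.mem_singleton_iff, hu]
    intro hk
    rw [Complex.ofReal_inj] at hk
    have := hpos k
    nlinarith
  apply h3.frequently
  apply (Filter.Eventually.of_forall _).frequently
  intro k
  show F (u k) = 0
  rw [hu]
  apply h (c + (b - a) / 4 * (1 / ((k:ℝ) + 1)))
  · have := hpos k; simp only [hc]; nlinarith
  · have := hpos k; have := hle k; simp only [hc]; nlinarith

section auxGz

lemma Gz_sum_mul_conj (n : ℕ) (z : Fin n → ℂ) :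
    (∑ i, z i * (starRingEnd ℂ) (z i)) = ((∑ i, Complex.normSq (z i) : ℝ) : ℂ) := by
  rw [Complex.ofReal_sum]
  exact Finset.sum_congr rfl fun i _ => Complex.mul_conj _

lemma Gz_norm_le_of_sum_normSq {n : ℕ} (z : Fin n → ℂ) {t : ℝ} (ht : 0 ≤ t)
    (hsum : (∑ i, Complex.normSq (z i)) ≤ t^2) : ‖z‖ ≤ t := by
  rw [pi_norm_le_iff_of_nonneg ht]
  intro i
  have h1 : Complex.normSq (z i) ≤ t^2 :=
    le_trans (Finset.single_le_sum (fun j _ => Complex.normSq_nonneg (z j))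
      (Finset.mem_univ i)) hsum
  have h2 : ‖z i‖^2 ≤ t^2 := by
    rwa [← Complex.sq_norm] at h1
  exact (pow_le_pow_iff_left₀ (norm_nonneg _) ht two_ne_zero).mp h2

end auxGz

set_option maxHeartbeats 2000000 in
/-- If G is holomorphic near 0 in ℂⁿ × ℂ and Im G(z,|z|²) = 0 for all z near 0,
then G is independent of z near 0 and G(0,x) is real for real x near 0. -/
theorem G_independent_of_z (n : ℕ) (hn : 1 ≤ n) (G : ((Fin n → ℂ) × ℂ) → ℂ)
    (U : Set ((Fin n → ℂ) × ℂ)) (hU : IsOpen U) (h0U : (0 : (Fin n → ℂ) × ℂ) ∈ U)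
    (hG : DifferentiableOn ℂ G U)
    (him : ∀ᶠ z : Fin n → ℂ in nhds 0,
      (G (z, ∑ i, z i * starRingEnd ℂ (z i))).im = 0) :
    (∀ᶠ p : (Fin n → ℂ) × ℂ in nhds 0, G p = G (0, p.2)) ∧
    (∀ᶠ x : ℝ in nhds 0, (G (0, (x : ℂ))).im = 0) := by
  obtain ⟨r, hr0, hrU⟩ := Metric.isOpen_iff.mp hU 0 h0U
  obtain ⟨ρ, hρ0, hρ⟩ := Metric.eventually_nhds_iff.mp him
  set ε : ℝ := min (min r ρ) 1 with hε
  have hε0 : 0 < ε := lt_min (lt_min hr0 hρ0) one_pos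
  have hεr : ε ≤ r := le_trans (min_le_left _ _) (min_le_left _ _)
  have hερ : ε ≤ ρ := le_trans (min_le_left _ _) (min_le_right _ _)
  have hε1 : ε ≤ 1 := min_le_right _ _
  have hε2 : ε^2 ≤ ε := by nlinarith
  have hUmem : ∀ (z : Fin n → ℂ) (w : ℂ), ‖z‖ < ε → ‖w‖ < ε → (z, w) ∈ U := by
    intro z w hz hw
    apply hrU
    rw [mem_ball, dist_zero_right, Prod.norm_def]
    exact max_lt (lt_of_lt_of_le hz hεr) (lt_of_lt_of_le hw hεr)
  have himv : ∀ z : Fin n → ℂ, ‖z‖ < ε →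
      (G (z, ∑ i, z i * (starRingEnd ℂ) (z i))).im = 0 := by
    intro z hz
    exact hρ (by rw [dist_zero_right]; exact lt_of_lt_of_le hz hερ)
  -- differentiability of slices
  have hGat : ∀ (z : Fin n → ℂ) (w : ℂ), ‖z‖ < ε → ‖w‖ < ε → DifferentiableAt ℂ G (z, w) :=
    fun z w hz hw => hG.differentiableAt (hU.mem_nhds (hUmem z w hz hw))
  -- Claim A
  have claimA : ∀ t : ℝ, 0 < t → t < ε^2 → ∀ z : Fin n → ℂ,
      (∑ i, Complex.normSq (z i)) < t → G (z, (t:ℂ)) = G (0, (t:ℂ)) := by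
    intro t ht htε z hz
    have htε' : t < ε := lt_of_lt_of_le htε hε2
    have htnorm : ‖(t:ℂ)‖ < ε := by
      rw [Complex.norm_real, Real.norm_eq_abs, abs_of_pos ht]; exact htε'
    have hst : Real.sqrt t < ε := by
      have := Real.sqrt_lt_sqrt ht.le htε
      rwa [Real.sqrt_sq hε0.le] at this
    by_cases hz0 : z = 0
    · rw [hz0]
    · obtain ⟨i₀, hi₀⟩ := Function.ne_iff.mp hz0
      have hsum_pos : 0 < ∑ i, Complex.normSq (z i) :=
        Finset.sum_pos' (fun j _ => Complex.normSq_nonneg (z j))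
          ⟨i₀, Finset.mem_univ i₀, Complex.normSq_pos.mpr hi₀⟩
      set s : ℝ := Real.sqrt (∑ i, Complex.normSq (z i)) with hsdef
      have hs_pos : 0 < s := Real.sqrt_pos.mpr hsum_pos
      have hs_sq : s * s = ∑ i, Complex.normSq (z i) := Real.mul_self_sqrt hsum_pos.le
      set v : Fin n → ℂ := ((s:ℂ))⁻¹ • z with hvdef
      have hvsum : (∑ i, Complex.normSq (v i)) = 1 := by
        have : ∀ i, Complex.normSq (v i) = (s*s)⁻¹ * Complex.normSq (z i) := by
          intro i
          simp only [hvdef, Pi.smul_apply, smul_eq_mul, map_mul, map_inv₀,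
            Complex.normSq_ofReal]
        rw [Finset.sum_congr rfl fun i _ => this i, ← Finset.mul_sum, ← hs_sq]
        field_simp
      have hvnorm : ‖v‖ ≤ 1 := Gz_norm_le_of_sum_normSq v one_pos.le (by rw [hvsum]; norm_num)
      set f : ℂ → ℂ := fun ζ => G (ζ • v, (t:ℂ)) with hfdef
      have hfdiff : DifferentiableOn ℂ f (ball 0 ε) := by
        intro ζ hζ
        rw [mem_ball, dist_zero_right] at hζ
        have hζv : ‖ζ • v‖ < ε := by
          rw [norm_smul]
          calc ‖ζ‖ * ‖v‖ ≤ ‖ζ‖ * 1 := by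
                exact mul_le_mul_of_nonneg_left hvnorm (norm_nonneg _)
            _ = ‖ζ‖ := mul_one _
            _ < ε := hζ
        have houter := hGat (ζ • v) (t:ℂ) hζv htnorm
        have hinner : DifferentiableAt ℂ (fun ζ : ℂ => (ζ • v, (t:ℂ))) ζ :=
          (differentiableAt_id.smul_const v).prodMk (differentiableAt_const _)
        exact (houter.comp ζ hinner).differentiableWithinAt
      have hbd : ∀ ζ ∈ sphere (0:ℂ) (Real.sqrt t), (f ζ).im = 0 := by
        intro ζ hζ
        rw [mem_sphere, dist_zero_right] at hζ
        have hζε : ‖ζ‖ < ε := by rw [hζ]; exact hst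
        have hzv : ‖ζ • v‖ < ε := by
          rw [norm_smul]
          calc ‖ζ‖ * ‖v‖ ≤ ‖ζ‖ * 1 := mul_le_mul_of_nonneg_left hvnorm (norm_nonneg _)
            _ = ‖ζ‖ := mul_one _
            _ < ε := hζε
        have hkey : (∑ i, (ζ • v) i * (starRingEnd ℂ) ((ζ • v) i)) = (t:ℂ) := by
          have h1 : ∀ i, (ζ • v) i * (starRingEnd ℂ) ((ζ • v) i)
              = (ζ * (starRingEnd ℂ) ζ) * (v i * (starRingEnd ℂ) (v i)) := by
            intro i
            simp only [Pi.smul_apply, smul_eq_mul, map_mul]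
            ring
          rw [Finset.sum_congr rfl fun i _ => h1 i, ← Finset.mul_sum,
            Gz_sum_mul_conj n v, hvsum, Complex.mul_conj]
          have : Complex.normSq ζ = t := by
            rw [Complex.normSq_eq_norm_sq, hζ, Real.sq_sqrt ht.le]
          rw [this]
          simp
        have := himv (ζ • v) hzv
        rwa [hkey] at this
      have hconst := const_of_real_boundary (Real.sqrt_pos.mpr ht) hst hfdiff hbd
      have hsmem : ((s:ℝ):ℂ) ∈ ball (0:ℂ) (Real.sqrt t) := by
        rw [mem_ball, dist_zero_right, Complex.norm_real, Real.norm_eq_abs,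
          abs_of_pos hs_pos]
        exact Real.sqrt_lt_sqrt hsum_pos.le hz
      have h1 := hconst ((s:ℝ):ℂ) hsmem
      have h2 : ((s:ℝ):ℂ) • v = z := by
        rw [hvdef, smul_smul, mul_inv_cancel₀ (by exact_mod_cast hs_pos.ne'), one_smul]
      have h3 : ((0:ℂ)) • v = (0 : Fin n → ℂ) := zero_smul _ _
      rw [hfdef] at h1
      simp only [h2, h3] at h1
      exact h1
  have hznorm : ∀ z : Fin n → ℂ, (∑ i, Complex.normSq (z i)) < ε^2/2 → ‖z‖ < ε := by
    intro z hz
    have h1 : ‖z‖ ≤ Real.sqrt (∑ i, Complex.normSq (z i)) :=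
      Gz_norm_le_of_sum_normSq z (Real.sqrt_nonneg _)
        (by rw [Real.sq_sqrt (Finset.sum_nonneg fun i _ => Complex.normSq_nonneg _)])
    have h2 : Real.sqrt (∑ i, Complex.normSq (z i)) < ε := by
      have hlt : (∑ i, Complex.normSq (z i)) < ε^2 := by nlinarith
      have := Real.sqrt_lt_sqrt (Finset.sum_nonneg fun i _ => Complex.normSq_nonneg (z i)) hlt
      rwa [Real.sqrt_sq hε0.le] at this
    exact lt_of_le_of_lt h1 h2
  -- differentiability of w ↦ G(z,w) on ball 0 ε, for ‖z‖ < ε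
  have hslice : ∀ z : Fin n → ℂ, ‖z‖ < ε →
      DifferentiableOn ℂ (fun w => G (z, w)) (ball 0 ε) := by
    intro z hz w hw
    rw [mem_ball, dist_zero_right] at hw
    have houter := hGat z w hz hw
    have hinner : DifferentiableAt ℂ (fun w : ℂ => ((z : Fin n → ℂ), w)) w :=
      (differentiableAt_const _).prodMk differentiableAt_id
    exact (houter.comp w hinner).differentiableWithinAt
  have h0ε : ‖(0 : Fin n → ℂ)‖ < ε := by simpa using hε0
  -- Claim B
  have claimB : ∀ z : Fin n → ℂ, (∑ i, Complex.normSq (z i)) < ε^2/2 →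
      ∀ w : ℂ, ‖w‖ < ε → G (z, w) = G (0, w) := by
    intro z hz
    have hzε : ‖z‖ < ε := hznorm z hz
    set d : ℂ → ℂ := fun w => G (z, w) - G (0, w) with hd
    have hdan : AnalyticOnNhd ℂ d (ball 0 ε) :=
      (((hslice z hzε).sub (hslice 0 h0ε))).analyticOnNhd isOpen_ball
    have hzeros : ∀ x : ℝ, ε^2/2 < x → x < ε^2 → d x = 0 := by
      intro x h1 h2
      have : G (z, (x:ℂ)) = G (0, (x:ℂ)) :=
        claimA x (by nlinarith) h2 z (by nlinarith)
      simp [hd, this]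
    have hfreq := freq_zero (show ε^2/2 < ε^2 by nlinarith) hzeros
    have hcmem : (((ε^2/2 + ε^2)/2 : ℝ) : ℂ) ∈ ball (0:ℂ) ε := by
      rw [mem_ball, dist_zero_right, Complex.norm_real, Real.norm_eq_abs,
        abs_of_pos (by nlinarith)]
      nlinarith
    have heq := hdan.eqOn_zero_of_preconnected_of_frequently_eq_zero
      (convex_ball (0:ℂ) ε).isPreconnected hcmem hfreq
    intro w hw
    have := heq (show w ∈ ball (0:ℂ) ε by rw [mem_ball, dist_zero_right]; exact hw)
    simpa [hd, sub_eq_zero] using this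
  constructor
  · -- part 1
    rw [Metric.eventually_nhds_iff]
    have hn0 : (0:ℝ) < n := by exact_mod_cast hn
    have hsn : (1:ℝ) ≤ Real.sqrt n := by
      rw [show (1:ℝ) = Real.sqrt 1 by simp]
      exact Real.sqrt_le_sqrt (by exact_mod_cast hn)
    refine ⟨ε / (2 * Real.sqrt n), by positivity, ?_⟩
    intro p hp
    rw [dist_zero_right] at hp
    have hp1 : ‖p.1‖ < ε / (2 * Real.sqrt n) := lt_of_le_of_lt (norm_fst_le p) hp
    have hp2 : ‖p.2‖ < ε := by
      refine lt_of_le_of_lt (norm_snd_le p) (lt_of_lt_of_le hp ?_)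
      rw [div_le_iff₀ (by positivity)]
      nlinarith
    have hsum : (∑ i, Complex.normSq (p.1 i)) < ε^2/2 := by
      have h1 : ∀ i, Complex.normSq (p.1 i) ≤ ‖p.1‖^2 := by
        intro i
        rw [← Complex.sq_norm]
        exact pow_le_pow_left₀ (norm_nonneg _) (norm_le_pi_norm p.1 i) 2
      calc (∑ i, Complex.normSq (p.1 i)) ≤ ∑ _i : Fin n, ‖p.1‖^2 :=
            Finset.sum_le_sum fun i _ => h1 i
        _ = n * ‖p.1‖^2 := by rw [Finset.sum_const]; simp [mul_comm]
        _ < ε^2/2 := by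
            have hlt : ‖p.1‖^2 < (ε / (2 * Real.sqrt n))^2 :=
              pow_lt_pow_left₀ hp1 (norm_nonneg _) two_ne_zero
            have hs2 : Real.sqrt n ^ 2 = n := Real.sq_sqrt hn0.le
            have : (ε / (2 * Real.sqrt n))^2 = ε^2 / (4 * n) := by
              rw [div_pow, mul_pow, hs2]; ring
            rw [this] at hlt
            have := mul_lt_mul_of_pos_left hlt hn0
            calc (n:ℝ) * ‖p.1‖^2 < n * (ε^2 / (4*n)) := this
              _ = ε^2/4 := by field_simp
              _ < ε^2/2 := by nlinarith
    have hGp : G p = G (p.1, p.2) := by rfl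
    rw [hGp, claimB p.1 hsum p.2 hp2]
  · -- part 2
    have hreal : ∀ x : ℝ, 0 < x → x < ε^2/2 → (G (0, (x:ℂ))).im = 0 := by
      intro x hx hxε
      have hxε2 : x < ε^2 := by nlinarith
      set z : Fin n → ℂ := fun i => if i = ⟨0, hn⟩ then ((Real.sqrt x : ℝ) : ℂ) else 0 with hz
      have hzsum : (∑ i, Complex.normSq (z i)) = x := by
        rw [hz]
        simp only [apply_ite Complex.normSq, Complex.normSq_ofReal, map_zero]
        rw [Finset.sum_ite_eq' Finset.univ (⟨0, hn⟩ : Fin n)]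
        simp [Real.mul_self_sqrt hx.le]
      have hsx : Real.sqrt x < ε := by
        have := Real.sqrt_lt_sqrt hx.le hxε2
        rwa [Real.sqrt_sq hε0.le] at this
      have hzn : ‖z‖ < ε := hznorm z (by rw [hzsum]; exact hxε)
      have h1 := himv z hzn
      rw [Gz_sum_mul_conj n z, hzsum] at h1
      have h2 := claimB z (by rw [hzsum]; exact hxε) ((x:ℝ):ℂ)
        (by rw [Complex.norm_real, Real.norm_eq_abs, abs_of_pos hx]; nlinarith)
      rwa [h2] at h1
    -- reflection
    set g : ℂ → ℂ := fun w => G (0, w) with hg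
    have hgd : DifferentiableOn ℂ g (ball 0 ε) := hslice 0 h0ε
    have hHd := conj_reflect_diff hgd
    set q : ℂ → ℂ := fun w => g w - (starRingEnd ℂ) (g ((starRingEnd ℂ) w)) with hq
    have hqan : AnalyticOnNhd ℂ q (ball 0 ε) :=
      (hgd.sub hHd).analyticOnNhd isOpen_ball
    have hqzero : ∀ x : ℝ, ε^2/4 < x → x < ε^2/2 → q x = 0 := by
      intro x h1 h2
      have him0 : (g x).im = 0 := hreal x (by nlinarith) h2
      have : (starRingEnd ℂ) ((x:ℝ):ℂ) = ((x:ℝ):ℂ) := Complex.conj_ofReal x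
      rw [hq]
      simp only [this]
      rw [Complex.conj_eq_iff_im.mpr him0, sub_self]
    have hfreq := freq_zero (show ε^2/4 < ε^2/2 by nlinarith) hqzero
    have hcmem : (((ε^2/4 + ε^2/2)/2 : ℝ) : ℂ) ∈ ball (0:ℂ) ε := by
      rw [mem_ball, dist_zero_right, Complex.norm_real, Real.norm_eq_abs,
        abs_of_pos (by nlinarith)]
      nlinarith
    have heq := hqan.eqOn_zero_of_preconnected_of_frequently_eq_zero
      (convex_ball (0:ℂ) ε).isPreconnected hcmem hfreq
    rw [Metric.eventually_nhds_iff]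
    refine ⟨ε, hε0, ?_⟩
    intro x hx
    rw [dist_zero_right, Real.norm_eq_abs] at hx
    have hxm : ((x:ℝ):ℂ) ∈ ball (0:ℂ) ε := by
      rw [mem_ball, dist_zero_right, Complex.norm_real, Real.norm_eq_abs]
      exact hx
    have h1 := heq hxm
    rw [hq] at h1
    simp only [Complex.conj_ofReal, Pi.zero_apply, sub_eq_zero] at h1
    have : (g ((x:ℝ):ℂ)).im = 0 := by
      rw [← Complex.conj_eq_iff_im, ← h1]
    exact this
end

section
/- Let n ≥ 2 and let M be the formal submanifold w = |z|² + E(z,z̄) with Ord(E) ≥ 3 and E formally real-valued, i.e. E(z,z̄) = conj(E(z,z̄)) as formal power series. Then in the unique normalized transformation H = (F,G) of Theorem 2.3 transforming M to its pseudo-normal form w' = |z'|² + φ(z',z̄'), the w-component G(z,w) is a formal power series in w alone with real coefficients, and φ is formally real-valued. -/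
open MvPowerSeries Complex

noncomputable section

namespace CRS

variable {σ τ : Type*} {n : ℕ}

/-- total degree of a monomial -/
def deg (μ : σ →₀ ℕ) : ℕ := μ.sum fun _ k => k

/-- formal substitution, coefficientwise (intended for substituting series
with zero constant term for the variables) -/
def msubst (v : σ → MvPowerSeries τ ℂ) (P : MvPowerSeries σ ℂ) : MvPowerSeries τ ℂ :=
  fun μ => ∑' ν : σ →₀ ℕ, (MvPowerSeries.coeff ν P) *
    (MvPowerSeries.coeff μ (ν.prod fun s k => v s ^ k))

/-- the "conjugate" series: swap z and z̄ and conjugate all coefficients -/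
def barT (P : MvPowerSeries (Fin n ⊕ Fin n) ℂ) : MvPowerSeries (Fin n ⊕ Fin n) ℂ :=
  fun μ => starRingEnd ℂ
    (MvPowerSeries.coeff (Finsupp.equivMapDomain (Equiv.sumComm (Fin n) (Fin n)) μ) P)

/-- u = |z|² = ∑ z_i z̄_i as a formal series in (z, z̄) -/
def uS (n : ℕ) : MvPowerSeries (Fin n ⊕ Fin n) ℂ :=
  ∑ i : Fin n, MvPowerSeries.X (Sum.inl i) * MvPowerSeries.X (Sum.inr i)

/-- The series u (for h = 0) and v_{h+1} (for h ≥ 1; 0-indexed version of the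
paper's v_k = ∑_{i<k}|z_i|² - |z_k|², 2 ≤ k ≤ n). -/
def vb (n : ℕ) [NeZero n] (h : Fin n) : MvPowerSeries (Fin n ⊕ Fin n) ℂ :=
  if h = 0 then uS n
  else (∑ i ∈ Finset.univ.filter (fun i : Fin n => i < h),
      MvPowerSeries.X (Sum.inl i) * MvPowerSeries.X (Sum.inr i))
    - MvPowerSeries.X (Sum.inl h) * MvPowerSeries.X (Sum.inr h)

/-- the monomial z^I z̄^J -/
def zmon (I J : Fin n →₀ ℕ) : (Fin n ⊕ Fin n) →₀ ℕ :=
  I.mapDomain Sum.inl + J.mapDomain Sum.inr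

/-- the series z^I z̄^J u^{k_1} v_2^{k_2} ⋯ v_n^{k_n}  (K = (k_1,…,k_n)) -/
def term [NeZero n] (I J K : Fin n →₀ ℕ) : MvPowerSeries (Fin n ⊕ Fin n) ℂ :=
  (MvPowerSeries.monomial (zmon I J) 1) * K.prod fun h k => vb n h ^ k

/-- the series ∑ c_{(I,J,K)} z^I z̄^J u^{k_1} v_2^{k_2} ⋯ v_n^{k_n} -/
def expand [NeZero n] (c : (Fin n →₀ ℕ) → (Fin n →₀ ℕ) → (Fin n →₀ ℕ) → ℂ) :
    MvPowerSeries (Fin n ⊕ Fin n) ℂ :=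
  fun μ => ∑' t : ((Fin n →₀ ℕ) × (Fin n →₀ ℕ) × (Fin n →₀ ℕ)),
    c t.1 t.2.1 t.2.2 * MvPowerSeries.coeff μ (term t.1 t.2.1 t.2.2)

/-- support condition i_l · j_l = 0 for all l -/
def SuppOK (c : (Fin n →₀ ℕ) → (Fin n →₀ ℕ) → (Fin n →₀ ℕ) → ℂ) : Prop :=
  ∀ I J K : Fin n →₀ ℕ, (∃ l, I l ≠ 0 ∧ J l ≠ 0) → c I J K = 0

/-- unit multi-index e_j -/
def e (j : Fin n) : Fin n →₀ ℕ := Finsupp.single j 1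

/-- Normalization condition (2.8) on the coefficients of the expansion of φ. -/
def Norm28 [NeZero n] (c : (Fin n →₀ ℕ) → (Fin n →₀ ℕ) → (Fin n →₀ ℕ) → ℂ) : Prop :=
  (∀ τ : ℕ, 2 ≤ τ → c 0 0 (Finsupp.single 0 τ) = 0) ∧
  (∀ l : ℕ, 1 ≤ l → ∀ i : Fin n, i ≠ 0 → (c 0 0 (Finsupp.single 0 l + e i)).re = 0) ∧
  (∀ l : ℕ, 1 ≤ l → ∀ i j : Fin n, j < i → c (e i) (e j) (Finsupp.single 0 l) = 0) ∧
  (∀ l : ℕ, 1 ≤ l → ∀ I : Fin n →₀ ℕ, I ≠ 0 →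
    c I 0 (Finsupp.single 0 l) = 0 ∧ c 0 I (Finsupp.single 0 l) = 0) ∧
  (∀ k : ℕ, ∀ j : Fin n, j ≠ 0 → ∀ I : Fin n →₀ ℕ, I ≠ 0 →
    c 0 I (Finsupp.single 0 k + e j) = 0) ∧
  (∀ k : ℕ, ∀ h : Fin n, ∀ I : Fin n →₀ ℕ, 2 ≤ deg I → I h = 0 →
    c I (e h) (Finsupp.single 0 k) = 0) ∧
  (∀ I : Fin n →₀ ℕ, 2 < deg I → c 0 I 0 = starRingEnd ℂ (c I 0 0))

/-- φ is in the pseudo-normal form (2.8). -/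
def Norm28' [NeZero n] (φ : MvPowerSeries (Fin n ⊕ Fin n) ℂ) : Prop :=
  ∃ c, SuppOK c ∧ φ = expand c ∧ Norm28 c

/-- weighted degree: z has weight 1, w weight 2 -/
def wdeg (ν : (Fin n ⊕ Unit) →₀ ℕ) : ℕ :=
  ν.sum fun s k => (Sum.elim (fun _ => 1) (fun _ => 2) s) * k

/-- `Ord(P) ≥ k` -/
def OrdGE (P : MvPowerSeries σ ℂ) (k : ℕ) : Prop :=
  ∀ μ : σ →₀ ℕ, deg μ < k → MvPowerSeries.coeff μ P = 0

/-- `Ord_wt(f) ≥ k` -/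
def OrdWtGE (f : MvPowerSeries (Fin n ⊕ Unit) ℂ) (k : ℕ) : Prop :=
  ∀ ν : (Fin n ⊕ Unit) →₀ ℕ, wdeg ν < k → MvPowerSeries.coeff ν f = 0

/-- substitute z_i ↦ z_i and w ↦ Φ(z,z̄) in a series in (z,w) -/
def substZW (Φ : MvPowerSeries (Fin n ⊕ Fin n) ℂ) (P : MvPowerSeries (Fin n ⊕ Unit) ℂ) :
    MvPowerSeries (Fin n ⊕ Fin n) ℂ :=
  msubst (Sum.elim (fun i => MvPowerSeries.X (Sum.inl i)) (fun _ => Φ)) P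

def eZ (j : Fin n) : (Fin n ⊕ Unit) →₀ ℕ := Finsupp.single (Sum.inl j) 1

def wPow (n : ℕ) (m : ℕ) : (Fin n ⊕ Unit) →₀ ℕ := Finsupp.single (Sum.inr ()) m

/-- Normalization condition (2.6) on f, where the map is (z,w) ↦ (z + f(z,w), w + g(z,w)):
f_{i,(0)} = 0, f_{i,(e_j)} = 0 for j < i, f_{1,(e_1)} = 0, f_{i,(e_i)} real for i ≥ 2. -/
def Norm26 [NeZero n] (f : Fin n → MvPowerSeries (Fin n ⊕ Unit) ℂ) : Prop :=
  (∀ (i : Fin n) (m : ℕ), MvPowerSeries.coeff (wPow n m) (f i) = 0) ∧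
  (∀ i j : Fin n, j < i → ∀ m : ℕ, MvPowerSeries.coeff (eZ j + wPow n m) (f i) = 0) ∧
  (∀ m : ℕ, MvPowerSeries.coeff (eZ 0 + wPow n m) (f 0) = 0) ∧
  (∀ i : Fin n, i ≠ 0 → ∀ m : ℕ,
    starRingEnd ℂ (MvPowerSeries.coeff (eZ i + wPow n m) (f i))
      = MvPowerSeries.coeff (eZ i + wPow n m) (f i))

/-- the linear part of a formal transformation (F, G) of (ℂ^{n+1}, 0) -/
def linMat (F : Fin n → MvPowerSeries (Fin n ⊕ Unit) ℂ) (G : MvPowerSeries (Fin n ⊕ Unit) ℂ) :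
    Matrix (Fin n ⊕ Unit) (Fin n ⊕ Unit) ℂ :=
  fun s t => MvPowerSeries.coeff (Finsupp.single t 1) (Sum.elim F (fun _ => G) s)

/-- (F,G) is a formal invertible transformation of (ℂ^{n+1},0) with H(0) = 0 -/
def InvTrans (F : Fin n → MvPowerSeries (Fin n ⊕ Unit) ℂ)
    (G : MvPowerSeries (Fin n ⊕ Unit) ℂ) : Prop :=
  (∀ i, MvPowerSeries.constantCoeff (F i) = 0) ∧
  MvPowerSeries.constantCoeff G = 0 ∧
  (linMat F G).det ≠ 0

/-- `H = (F,G)` transforms the manifold `w = |z|² + E(z,z̄)` into `w' = |z'|² + E'(z',z̄')`: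
the identity G(z,Φ) = ∑ F_i(z,Φ) conj(F_i(z,Φ)) + E'(F(z,Φ), conj F(z,Φ)), Φ = |z|² + E,
of formal power series in (z, z̄). -/
def Transforms (E : MvPowerSeries (Fin n ⊕ Fin n) ℂ)
    (F : Fin n → MvPowerSeries (Fin n ⊕ Unit) ℂ) (G : MvPowerSeries (Fin n ⊕ Unit) ℂ)
    (E' : MvPowerSeries (Fin n ⊕ Fin n) ℂ) : Prop :=
  substZW (uS n + E) G =
    (∑ i : Fin n, substZW (uS n + E) (F i) * barT (substZW (uS n + E) (F i)))
    + msubst (Sum.elim (fun i => substZW (uS n + E) (F i))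
        (fun i => barT (substZW (uS n + E) (F i)))) E'

/-- convergence of a formal power series near 0 -/
def Conv (P : MvPowerSeries σ ℂ) : Prop :=
  ∃ r : ℝ, 0 < r ∧ Summable fun ν : σ →₀ ℕ => ‖MvPowerSeries.coeff ν P‖ * r ^ deg ν

/-- evaluation of a series in (z,z̄) at the point (z,ξ) -/
def evalT (P : MvPowerSeries (Fin n ⊕ Fin n) ℂ) (z ξ : Fin n → ℂ) : ℂ :=
  ∑' μ : (Fin n ⊕ Fin n) →₀ ℕ,
    MvPowerSeries.coeff μ P * μ.prod fun s k => (Sum.elim z ξ s) ^ k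

/-- evaluation of a series in (z,w) at the point (z,w) -/
def evalS (P : MvPowerSeries (Fin n ⊕ Unit) ℂ) (z : Fin n → ℂ) (w : ℂ) : ℂ :=
  ∑' ν : (Fin n ⊕ Unit) →₀ ℕ,
    MvPowerSeries.coeff ν P * ν.prod fun s k => (Sum.elim z (fun _ => w) s) ^ k

/-- truncation of a series in (z,w) to weighted degree ≤ N -/
def truncWt (N : ℕ) (f : MvPowerSeries (Fin n ⊕ Unit) ℂ) : MvPowerSeries (Fin n ⊕ Unit) ℂ :=
  fun ν => if wdeg ν ≤ N then MvPowerSeries.coeff ν f else 0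

/-- the lowest order of vanishing of a series (∞ if the series is 0) -/
def ordS (P : MvPowerSeries σ ℂ) : ℕ∞ :=
  sInf ((fun μ => (deg μ : ℕ∞)) '' {μ | MvPowerSeries.coeff μ P ≠ 0})

/-- the polyradius R = (2^{-(n-2)/2} r, 2^{-(n-2)/2} r, 2^{-(n-3)/2} r, …, r)  (0-indexed) -/
def Rad (n : ℕ) (r : ℝ) : Fin n → ℝ := fun i =>
  if (i : ℕ) = 0 then (2 : ℝ) ^ (-(((n : ℝ) - 2) / 2)) * r
  else (2 : ℝ) ^ (-(((n : ℝ) - 1 - (i : ℕ)) / 2)) * r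

def RadS (n : ℕ) (r : ℝ) : Fin n ⊕ Fin n → ℝ := Sum.elim (Rad n r) (Rad n r)

/-- the polydisc D_r ⊂ ℂⁿ × ℂⁿ -/
def Dset (n : ℕ) (r : ℝ) : Set ((Fin n → ℂ) × (Fin n → ℂ)) :=
  {q | (∀ i, ‖q.1 i‖ < Rad n r i) ∧ (∀ i, ‖q.2 i‖ < Rad n r i)}

/-- the domain Δ_r ⊂ ℂⁿ × ℂ -/
def DeltaSet (n : ℕ) (r : ℝ) : Set ((Fin n → ℂ) × ℂ) :=
  {p | (∀ i, ‖p.1 i‖ < Rad n r i) ∧ ‖p.2‖ < 2 * r ^ 2}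

/-- ‖E‖_r : the sup norm of (the sum of) E on D_r -/
def normD (n : ℕ) (r : ℝ) (P : MvPowerSeries (Fin n ⊕ Fin n) ℂ) : ℝ :=
  sSup {x : ℝ | ∃ q ∈ Dset n r, x = ‖evalT P q.1 q.2‖}

/-- |h|_r : the sup norm of (the sum of) h on Δ_r -/
def normDelta (n : ℕ) (r : ℝ) (P : MvPowerSeries (Fin n ⊕ Unit) ℂ) : ℝ :=
  sSup {x : ℝ | ∃ p ∈ DeltaSet n r, x = ‖evalS P p.1 p.2‖}

/-- |∇h|_r : the sup norm of the derivative of (the sum of) h on Δ_r -/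
def normGrad (n : ℕ) (r : ℝ) (P : MvPowerSeries (Fin n ⊕ Unit) ℂ) : ℝ :=
  sSup {x : ℝ | ∃ p ∈ DeltaSet n r,
    x = ‖fderiv ℂ (fun q : (Fin n → ℂ) × ℂ => evalS P q.1 q.2) p‖}

/-- E is holomorphic on a neighborhood of the closed polydisc D̄_r: its coefficients
are summable against a slightly larger polyradius. -/
def HoloOn (n : ℕ) (r : ℝ) (P : MvPowerSeries (Fin n ⊕ Fin n) ℂ) : Prop :=
  ∃ ρ : ℝ, 1 < ρ ∧ Summable fun μ : (Fin n ⊕ Fin n) →₀ ℕ =>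
    ‖MvPowerSeries.coeff μ P‖ * μ.prod fun s k => (ρ * RadS n r s) ^ k

/-- the solution (f, g, φ) of the linearized equation
Γ(z,z̄) + g(z,u) = 2Re(∑ z̄_i f_i(z,u)) + φ(z,z̄), normalized by (2.6) and (2.8),
with Ord_wt f ≥ 2, Ord_wt g ≥ 3, Ord φ ≥ 3. -/
def LinearizedSol [NeZero n] (Γ : MvPowerSeries (Fin n ⊕ Fin n) ℂ)
    (f : Fin n → MvPowerSeries (Fin n ⊕ Unit) ℂ) (g : MvPowerSeries (Fin n ⊕ Unit) ℂ)
    (φ : MvPowerSeries (Fin n ⊕ Fin n) ℂ) : Prop :=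
  (∀ i, OrdWtGE (f i) 2) ∧ OrdWtGE g 3 ∧ OrdGE φ 3 ∧ Norm26 f ∧ Norm28' φ ∧
  Γ + substZW (uS n) g =
    (∑ i : Fin n, MvPowerSeries.X (Sum.inr i) * substZW (uS n) (f i)) +
    barT (∑ i : Fin n, MvPowerSeries.X (Sum.inr i) * substZW (uS n) (f i)) + φ

end CRS

namespace CRS
variable {σ τ : Type*} {n : ℕ}

lemma deg_add (a b : σ →₀ ℕ) : deg (a + b) = deg a + deg b := by
  classical
  simpa [deg] using Finsupp.sum_add_index' (by simp) (by simp) (f := a) (g := b) (h := fun _ k => k)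

lemma deg_zero : deg (0 : σ →₀ ℕ) = 0 := by simp [deg]

lemma deg_single (s : σ) (k : ℕ) : deg (Finsupp.single s k) = k := by
  classical
  simp [deg, Finsupp.sum_single_index]

lemma deg_eq_zero_iff (a : σ →₀ ℕ) : deg a = 0 ↔ a = 0 := by
  classical
  constructor
  · intro h
    ext s
    simp only [Finsupp.coe_zero, Pi.zero_apply]
    by_contra hs
    have hmem : s ∈ a.support := Finsupp.mem_support_iff.2 hs
    have : a s ≤ deg a := Finset.single_le_sum (f := fun t => a t) (fun _ _ => Nat.zero_le _) hmem
    omega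
  · rintro rfl; simp [deg]

lemma apply_le_deg (a : σ →₀ ℕ) (s : σ) : a s ≤ deg a := by
  classical
  by_cases hs : a s = 0
  · simp [hs]
  · exact Finset.single_le_sum (f := fun t => a t) (fun _ _ => Nat.zero_le _)
      (Finsupp.mem_support_iff.2 hs)

/-- homogeneity of a power series -/
def IsHomog (P : MvPowerSeries σ ℂ) (m : ℕ) : Prop :=
  ∀ μ : (σ →₀ ℕ), deg μ ≠ m → MvPowerSeries.coeff μ P = 0

lemma IsHomog.add {P Q : MvPowerSeries σ ℂ} {m : ℕ} (hP : IsHomog P m) (hQ : IsHomog Q m) :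
    IsHomog (P + Q) m := fun μ hμ => by simp [map_add, hP μ hμ, hQ μ hμ]

lemma IsHomog.neg {P : MvPowerSeries σ ℂ} {m : ℕ} (hP : IsHomog P m) : IsHomog (-P) m :=
  fun μ hμ => by simp [hP μ hμ]

lemma IsHomog.sub {P Q : MvPowerSeries σ ℂ} {m : ℕ} (hP : IsHomog P m) (hQ : IsHomog Q m) :
    IsHomog (P - Q) m := fun μ hμ => by simp [map_sub, hP μ hμ, hQ μ hμ]

lemma IsHomog.sum {ι : Type*} (s : Finset ι) (f : ι → MvPowerSeries σ ℂ) {m : ℕ}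
    (h : ∀ i ∈ s, IsHomog (f i) m) : IsHomog (∑ i ∈ s, f i) m := fun μ hμ => by
  rw [map_sum]
  exact Finset.sum_eq_zero fun i hi => h i hi μ hμ

lemma IsHomog.monomial (ν : σ →₀ ℕ) (a : ℂ) : IsHomog (MvPowerSeries.monomial ν a) (deg ν) := by
  classical
  intro μ hμ
  rw [MvPowerSeries.coeff_monomial]
  simp only [ite_eq_right_iff]
  intro h; exact absurd (by rw [h]) hμ

lemma IsHomog.one : IsHomog (1 : MvPowerSeries σ ℂ) 0 := by
  simpa [deg_zero] using IsHomog.monomial (0 : σ →₀ ℕ) (1 : ℂ)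

lemma IsHomog.X (s : σ) : IsHomog (MvPowerSeries.X s : MvPowerSeries σ ℂ) 1 := by
  classical
  have := IsHomog.monomial (σ := σ) (Finsupp.single s 1) (1 : ℂ)
  rw [deg_single] at this
  exact this

lemma IsHomog.mul {P Q : MvPowerSeries σ ℂ} {a b : ℕ} (hP : IsHomog P a) (hQ : IsHomog Q b) :
    IsHomog (P * Q) (a + b) := by
  classical
  intro μ hμ
  rw [MvPowerSeries.coeff_mul]
  apply Finset.sum_eq_zero
  rintro ⟨p, q⟩ hpq
  rw [Finset.HasAntidiagonal.mem_antidiagonal] at hpq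
  by_cases hp : deg p = a
  · have hq : deg q ≠ b := by
      intro hq
      apply hμ
      rw [← hpq, deg_add, hp, hq]
    simp [hQ q hq]
  · simp [hP p hp]

lemma IsHomog.pow {P : MvPowerSeries σ ℂ} {a : ℕ} (hP : IsHomog P a) (k : ℕ) :
    IsHomog (P ^ k) (k * a) := by
  induction k with
  | zero => simpa using IsHomog.one
  | succ k ih =>
      have := ih.mul hP
      rw [pow_succ]
      convert this using 1
      ring

lemma IsHomog.zero (m : ℕ) : IsHomog (0 : MvPowerSeries σ ℂ) m := fun μ _ => by simp

lemma IsHomog.ordGE {P : MvPowerSeries σ ℂ} {m : ℕ} (hP : IsHomog P m) : OrdGE P m :=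
  fun μ hμ => hP μ (by omega)

lemma OrdGE.mono {P : MvPowerSeries σ ℂ} {a b : ℕ} (hP : OrdGE P a) (h : b ≤ a) : OrdGE P b :=
  fun μ hμ => hP μ (by omega)

lemma OrdGE.add {P Q : MvPowerSeries σ ℂ} {m : ℕ} (hP : OrdGE P m) (hQ : OrdGE Q m) :
    OrdGE (P + Q) m := fun μ hμ => by simp [map_add, hP μ hμ, hQ μ hμ]

lemma OrdGE.sub {P Q : MvPowerSeries σ ℂ} {m : ℕ} (hP : OrdGE P m) (hQ : OrdGE Q m) :
    OrdGE (P - Q) m := fun μ hμ => by simp [map_sub, hP μ hμ, hQ μ hμ]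

lemma OrdGE.neg {P : MvPowerSeries σ ℂ} {m : ℕ} (hP : OrdGE P m) : OrdGE (-P) m :=
  fun μ hμ => by simp [hP μ hμ]

lemma OrdGE.sum {ι : Type*} (s : Finset ι) (f : ι → MvPowerSeries σ ℂ) {m : ℕ}
    (h : ∀ i ∈ s, OrdGE (f i) m) : OrdGE (∑ i ∈ s, f i) m := fun μ hμ => by
  rw [map_sum]; exact Finset.sum_eq_zero fun i hi => h i hi μ hμ

lemma OrdGE.mul {P Q : MvPowerSeries σ ℂ} {a b : ℕ} (hP : OrdGE P a) (hQ : OrdGE Q b) :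
    OrdGE (P * Q) (a + b) := by
  classical
  intro μ hμ
  rw [MvPowerSeries.coeff_mul]
  apply Finset.sum_eq_zero
  rintro ⟨p, q⟩ hpq
  rw [Finset.HasAntidiagonal.mem_antidiagonal] at hpq
  have hdeg : deg p + deg q < a + b := by
    have := deg_add p q
    rw [hpq] at this
    omega
  by_cases hp : deg p < a
  · simp [hP p hp]
  · have : deg q < b := by omega
    simp [hQ q this]

lemma OrdGE.pow {P : MvPowerSeries σ ℂ} {a : ℕ} (hP : OrdGE P a) (k : ℕ) :
    OrdGE (P ^ k) (k * a) := by
  induction k with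
  | zero => intro μ hμ; omega
  | succ k ih =>
      have := ih.mul hP
      rw [pow_succ]
      exact this.mono (by ring_nf; omega)

lemma OrdGE.zero (m : ℕ) : OrdGE (0 : MvPowerSeries σ ℂ) m := fun μ _ => by simp



/-- swap of a multi-exponent -/
def sw (μ : (Fin n ⊕ Fin n) →₀ ℕ) : (Fin n ⊕ Fin n) →₀ ℕ :=
  Finsupp.equivMapDomain (Equiv.sumComm (Fin n) (Fin n)) μ

lemma sw_apply (μ : (Fin n ⊕ Fin n) →₀ ℕ) (s : Fin n ⊕ Fin n) :
    sw μ s = μ (Equiv.sumComm (Fin n) (Fin n) s) := by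
  cases s <;> rfl

lemma sw_add (a b : (Fin n ⊕ Fin n) →₀ ℕ) : sw (a + b) = sw a + sw b := by
  ext s; simp [sw_apply]

lemma sw_sw (μ : (Fin n ⊕ Fin n) →₀ ℕ) : sw (sw μ) = μ := by
  ext s; cases s <;> simp [sw_apply]

lemma sw_zero : sw (0 : (Fin n ⊕ Fin n) →₀ ℕ) = 0 := by ext s; simp [sw_apply]

lemma sw_inj {a b : (Fin n ⊕ Fin n) →₀ ℕ} (h : sw a = sw b) : a = b := by
  have := congrArg sw h; rwa [sw_sw, sw_sw] at this

lemma deg_sw (μ : (Fin n ⊕ Fin n) →₀ ℕ) : deg (sw μ) = deg μ := by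
  classical
  rw [deg, deg, sw, Finsupp.sum_equivMapDomain]

lemma coeff_barT (P : MvPowerSeries (Fin n ⊕ Fin n) ℂ) (μ : (Fin n ⊕ Fin n) →₀ ℕ) :
    MvPowerSeries.coeff μ (barT P) = starRingEnd ℂ (MvPowerSeries.coeff (sw μ) P) := rfl

lemma barT_barT (P : MvPowerSeries (Fin n ⊕ Fin n) ℂ) : barT (barT P) = P := by
  ext μ
  rw [coeff_barT, coeff_barT, sw_sw]
  simp

lemma barT_add (P Q : MvPowerSeries (Fin n ⊕ Fin n) ℂ) : barT (P + Q) = barT P + barT Q := by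
  ext μ; simp [coeff_barT, map_add]

lemma barT_sub (P Q : MvPowerSeries (Fin n ⊕ Fin n) ℂ) : barT (P - Q) = barT P - barT Q := by
  ext μ; simp [coeff_barT, map_sub]

lemma barT_sum {ι : Type*} (s : Finset ι) (f : ι → MvPowerSeries (Fin n ⊕ Fin n) ℂ) :
    barT (∑ i ∈ s, f i) = ∑ i ∈ s, barT (f i) := by
  ext μ; simp [coeff_barT, map_sum]

lemma barT_zero : barT (0 : MvPowerSeries (Fin n ⊕ Fin n) ℂ) = 0 := by
  ext μ; simp [coeff_barT]

lemma barT_mul (P Q : MvPowerSeries (Fin n ⊕ Fin n) ℂ) : barT (P * Q) = barT P * barT Q := by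
  classical
  ext μ
  rw [coeff_barT, MvPowerSeries.coeff_mul, MvPowerSeries.coeff_mul, map_sum]
  refine Finset.sum_nbij' (fun p => (sw p.1, sw p.2)) (fun p => (sw p.1, sw p.2)) ?_ ?_ ?_ ?_ ?_
  · rintro ⟨a, b⟩ hab
    rw [Finset.HasAntidiagonal.mem_antidiagonal] at hab ⊢
    simp only
    rw [← sw_add, hab, sw_sw]
  · rintro ⟨a, b⟩ hab
    rw [Finset.HasAntidiagonal.mem_antidiagonal] at hab ⊢
    simp only
    rw [← sw_add, hab]
  · rintro ⟨a, b⟩ _; simp [sw_sw]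
  · rintro ⟨a, b⟩ _; simp [sw_sw]
  · rintro ⟨a, b⟩ _
    simp [coeff_barT, map_mul, sw_sw]

lemma barT_prod {ι : Type*} (s : Finset ι) (f : ι → MvPowerSeries (Fin n ⊕ Fin n) ℂ) :
    barT (∏ i ∈ s, f i) = ∏ i ∈ s, barT (f i) := by
  classical
  induction s using Finset.induction with
  | empty =>
      simp only [Finset.prod_empty]
      ext μ
      rw [coeff_barT]
      rw [show ((1 : MvPowerSeries (Fin n ⊕ Fin n) ℂ)) = MvPowerSeries.monomial 0 1 by
        simp]
      rw [MvPowerSeries.coeff_monomial, MvPowerSeries.coeff_monomial]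
      by_cases h : μ = 0
      · subst h; simp [sw_zero]
      · have : sw μ ≠ 0 := fun hc => h (by simpa [sw_zero] using sw_inj (by rw [hc, sw_zero]))
        simp [h, this]
  | insert _ _ hx ih =>
      rw [Finset.prod_insert hx, Finset.prod_insert hx, barT_mul, ih]

lemma barT_pow (P : MvPowerSeries (Fin n ⊕ Fin n) ℂ) (k : ℕ) : barT (P ^ k) = barT P ^ k := by
  induction k with
  | zero =>
      simpa using barT_prod (∅ : Finset ℕ) (fun _ => P)
  | succ k ih => rw [pow_succ, pow_succ, barT_mul, ih]

lemma barT_one : barT (1 : MvPowerSeries (Fin n ⊕ Fin n) ℂ) = 1 := by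
  simpa using barT_prod (∅ : Finset ℕ) (fun _ => (1 : MvPowerSeries (Fin n ⊕ Fin n) ℂ))

lemma barT_monomial (ν : (Fin n ⊕ Fin n) →₀ ℕ) (a : ℂ) :
    barT (MvPowerSeries.monomial ν a) = MvPowerSeries.monomial (sw ν) (starRingEnd ℂ a) := by
  classical
  ext μ
  rw [coeff_barT, MvPowerSeries.coeff_monomial, MvPowerSeries.coeff_monomial]
  by_cases h : μ = sw ν
  · subst h; simp [sw_sw]
  · have : sw μ ≠ ν := fun hc => h (by rw [← hc, sw_sw])
    simp [h, this]

lemma barT_X_inl (i : Fin n) :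
    barT (MvPowerSeries.X (Sum.inl i) : MvPowerSeries (Fin n ⊕ Fin n) ℂ)
      = MvPowerSeries.X (Sum.inr i) := by
  have h1 : (MvPowerSeries.X (Sum.inl i) : MvPowerSeries (Fin n ⊕ Fin n) ℂ)
      = MvPowerSeries.monomial (Finsupp.single (Sum.inl i) 1) 1 := rfl
  have h2 : (MvPowerSeries.X (Sum.inr i) : MvPowerSeries (Fin n ⊕ Fin n) ℂ)
      = MvPowerSeries.monomial (Finsupp.single (Sum.inr i) 1) 1 := rfl
  have hs : sw (Finsupp.single (Sum.inl i) 1) = Finsupp.single (Sum.inr i) (1 : ℕ) := by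
    ext s; cases s <;> simp [sw_apply, Finsupp.single_apply]
  rw [h1, barT_monomial, hs, map_one, ← h2]

lemma barT_X_inr (i : Fin n) :
    barT (MvPowerSeries.X (Sum.inr i) : MvPowerSeries (Fin n ⊕ Fin n) ℂ)
      = MvPowerSeries.X (Sum.inl i) := by
  have := congrArg barT (barT_X_inl (n := n) i)
  rw [barT_barT] at this
  exact this.symm

lemma barT_uS : barT (uS n) = uS n := by
  rw [uS, barT_sum]
  apply Finset.sum_congr rfl
  intro i _
  rw [barT_mul, barT_X_inl, barT_X_inr, mul_comm]

lemma barT_vb [NeZero n] (h : Fin n) : barT (vb n h) = vb n h := by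
  by_cases h0 : h = 0
  · subst h0
    simp only [vb, if_pos rfl]
    exact barT_uS
  · simp only [vb, if_neg h0]
    rw [barT_sub, barT_sum]
    congr 1
    · apply Finset.sum_congr rfl
      intro i _
      rw [barT_mul, barT_X_inl, barT_X_inr, mul_comm]
    · rw [barT_mul, barT_X_inl, barT_X_inr, mul_comm]



variable {n : ℕ}

lemma zmon_apply_inl (I J : Fin n →₀ ℕ) (i : Fin n) : zmon I J (Sum.inl i) = I i := by
  classical
  rw [zmon, Finsupp.add_apply, Finsupp.mapDomain_apply Sum.inl_injective,
    Finsupp.mapDomain_notin_range]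
  · simp
  · rintro ⟨j, hj⟩; exact Sum.inl_ne_inr hj.symm

lemma zmon_apply_inr (I J : Fin n →₀ ℕ) (i : Fin n) : zmon I J (Sum.inr i) = J i := by
  classical
  rw [zmon, Finsupp.add_apply, Finsupp.mapDomain_apply Sum.inr_injective,
    Finsupp.mapDomain_notin_range]
  · simp
  · rintro ⟨j, hj⟩; exact Sum.inr_ne_inl hj.symm

lemma zmon_inj {I J I' J' : Fin n →₀ ℕ} (h : zmon I J = zmon I' J') : I = I' ∧ J = J' := by
  constructor
  · ext i; rw [← zmon_apply_inl I J i, h, zmon_apply_inl]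
  · ext i; rw [← zmon_apply_inr I J i, h, zmon_apply_inr]

lemma deg_mapDomain {α β : Type*} (f : α → β) (v : α →₀ ℕ) : deg (v.mapDomain f) = deg v := by
  classical
  rw [deg, deg, Finsupp.sum_mapDomain_index] <;> simp

lemma deg_zmon (I J : Fin n →₀ ℕ) : deg (zmon I J) = deg I + deg J := by
  rw [zmon, deg_add, deg_mapDomain, deg_mapDomain]

lemma sw_zmon (I J : Fin n →₀ ℕ) : sw (zmon I J) = zmon J I := by
  ext s
  cases s with
  | inl i => rw [sw_apply]; simp only [Equiv.sumComm_apply, Sum.swap_inl]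
             rw [zmon_apply_inr, zmon_apply_inl]
  | inr i => rw [sw_apply]; simp only [Equiv.sumComm_apply, Sum.swap_inr]
             rw [zmon_apply_inl, zmon_apply_inr]

lemma IsHomog.prod {ι : Type*} (s : Finset ι) (f : ι → MvPowerSeries (Fin n ⊕ Fin n) ℂ)
    (d : ι → ℕ) (h : ∀ i ∈ s, IsHomog (f i) (d i)) :
    IsHomog (∏ i ∈ s, f i) (∑ i ∈ s, d i) := by
  classical
  induction s using Finset.induction with
  | empty => simpa using IsHomog.one
  | insert _ _ hx ih =>
      rw [Finset.prod_insert hx, Finset.sum_insert hx]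
      exact (h _ (Finset.mem_insert_self _ _)).mul
        (ih fun i hi => h i (Finset.mem_insert_of_mem hi))

lemma homog_uS : IsHomog (uS n) 2 := by
  apply IsHomog.sum
  intro i _
  exact (IsHomog.X _).mul (IsHomog.X _)

lemma homog_vb [NeZero n] (h : Fin n) : IsHomog (vb n h) 2 := by
  by_cases h0 : h = 0
  · subst h0; simp only [vb, if_pos rfl]; exact homog_uS
  · simp only [vb, if_neg h0]
    exact (IsHomog.sum _ _ (fun i _ => (IsHomog.X _).mul (IsHomog.X _))).sub
      ((IsHomog.X _).mul (IsHomog.X _))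

lemma homog_vbpow [NeZero n] (K : Fin n →₀ ℕ) :
    IsHomog (K.prod fun h k => vb n h ^ k) (2 * deg K) := by
  classical
  simp only [Finsupp.prod]
  have : 2 * deg K = ∑ h ∈ K.support, (K h) * 2 := by
    rw [deg, Finsupp.sum, Finset.mul_sum]
    apply Finset.sum_congr rfl
    intros; ring
  rw [this]
  exact IsHomog.prod _ _ _ (fun h _ => (homog_vb h).pow (K h))

lemma homog_term [NeZero n] (I J K : Fin n →₀ ℕ) :
    IsHomog (term I J K) (deg I + deg J + 2 * deg K) := by
  rw [term, show deg I + deg J + 2 * deg K = deg (zmon I J) + 2 * deg K by rw [deg_zmon]]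
  exact (IsHomog.monomial _ _).mul (homog_vbpow K)

lemma barT_term [NeZero n] (I J K : Fin n →₀ ℕ) : barT (term I J K) = term J I K := by
  classical
  rw [term, term, barT_mul, barT_monomial, sw_zmon, map_one]
  congr 1
  simp only [Finsupp.prod]; rw [barT_prod]
  apply Finset.prod_congr rfl
  intro h _
  rw [barT_pow, barT_vb]

lemma vb_zero_eq [NeZero n] : vb n 0 = uS n := by simp [vb]

lemma vbpow_single [NeZero n] (k : ℕ) :
    ((Finsupp.single (0 : Fin n) k).prod fun h l => vb n h ^ l) = uS n ^ k := by
  classical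
  rw [Finsupp.prod_single_index (by simp), vb_zero_eq]

/-- total degree of a triple -/
def tdeg (t : (Fin n →₀ ℕ) × (Fin n →₀ ℕ) × (Fin n →₀ ℕ)) : ℕ :=
  deg t.1 + deg t.2.1 + 2 * deg t.2.2

/-- bound finsupp -/
def bnd (m : ℕ) : Fin n →₀ ℕ := Finsupp.equivFunOnFinite.symm (fun _ => m)

lemma le_bnd {m : ℕ} {I : Fin n →₀ ℕ} (h : deg I ≤ m) : I ≤ bnd m := by
  intro s
  exact le_trans (apply_le_deg I s) h

/-- the finset of triples of total degree m -/
def Tset (n : ℕ) (m : ℕ) : Finset ((Fin n →₀ ℕ) × (Fin n →₀ ℕ) × (Fin n →₀ ℕ)) :=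
  ((Finset.Iic (bnd m)) ×ˢ (Finset.Iic (bnd m)) ×ˢ (Finset.Iic (bnd m))).filter
    (fun t => tdeg t = m)

lemma mem_Tset {m : ℕ} {t : (Fin n →₀ ℕ) × (Fin n →₀ ℕ) × (Fin n →₀ ℕ)} :
    t ∈ Tset n m ↔ tdeg t = m := by
  classical
  rw [Tset, Finset.mem_filter]
  constructor
  · exact fun h => h.2
  · intro h
    refine ⟨?_, h⟩
    rw [Finset.mem_product, Finset.mem_product]
    rw [tdeg] at h
    refine ⟨Finset.mem_Iic.2 (le_bnd (by omega)), Finset.mem_Iic.2 (le_bnd (by omega)),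
      Finset.mem_Iic.2 (le_bnd (by omega))⟩

lemma coeff_expand [NeZero n] (c : (Fin n →₀ ℕ) → (Fin n →₀ ℕ) → (Fin n →₀ ℕ) → ℂ)
    (μ : (Fin n ⊕ Fin n) →₀ ℕ) :
    MvPowerSeries.coeff μ (expand c)
      = ∑ t ∈ Tset n (deg μ), c t.1 t.2.1 t.2.2 * MvPowerSeries.coeff μ (term t.1 t.2.1 t.2.2) := by
  apply tsum_eq_sum
  intro t ht
  rw [mem_Tset] at ht
  rw [homog_term t.1 t.2.1 t.2.2 μ (by rw [tdeg] at ht; omega), mul_zero]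

lemma expand_sub [NeZero n] (c1 c2 : (Fin n →₀ ℕ) → (Fin n →₀ ℕ) → (Fin n →₀ ℕ) → ℂ) :
    expand (fun I J K => c1 I J K - c2 I J K) = expand c1 - expand c2 := by
  ext μ
  rw [map_sub, coeff_expand, coeff_expand, coeff_expand, ← Finset.sum_sub_distrib]
  apply Finset.sum_congr rfl
  intros; ring

lemma barT_expand [NeZero n] (c : (Fin n →₀ ℕ) → (Fin n →₀ ℕ) → (Fin n →₀ ℕ) → ℂ) :
    barT (expand c) = expand (fun I J K => starRingEnd ℂ (c J I K)) := by
  classical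
  ext μ
  rw [coeff_barT, coeff_expand, coeff_expand, map_sum, deg_sw]
  refine Finset.sum_nbij' (fun t => (t.2.1, t.1, t.2.2)) (fun t => (t.2.1, t.1, t.2.2))
    ?_ ?_ ?_ ?_ ?_
  · intro t ht; rw [mem_Tset] at ht ⊢; rw [tdeg] at ht ⊢; simp only; omega
  · intro t ht; rw [mem_Tset] at ht ⊢; rw [tdeg] at ht ⊢; simp only; omega
  · intro t _; rfl
  · intro t _; rfl
  · rintro ⟨I, J, K⟩ _
    simp only [map_mul]
    congr 1
    rw [← coeff_barT, barT_term]



variable {σ τ : Type*} {n : ℕ}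

lemma OrdGE.prod {ι : Type*} (s : Finset ι) (f : ι → MvPowerSeries τ ℂ)
    (d : ι → ℕ) (h : ∀ i ∈ s, OrdGE (f i) (d i)) :
    OrdGE (∏ i ∈ s, f i) (∑ i ∈ s, d i) := by
  classical
  induction s using Finset.induction with
  | empty =>
      intro μ hμ
      simp only [Finset.prod_empty, Finset.sum_empty] at *
      omega
  | insert _ _ hx ih =>
      rw [Finset.prod_insert hx, Finset.sum_insert hx]
      exact (h _ (Finset.mem_insert_self _ _)).mul
        (ih fun i hi => h i (Finset.mem_insert_of_mem hi))

lemma ordGE_prodpow (v : σ → MvPowerSeries τ ℂ) (w : σ → ℕ)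
    (hv : ∀ s, OrdGE (v s) (w s)) (ν : σ →₀ ℕ) :
    OrdGE (ν.prod fun s k => v s ^ k) (ν.sum fun s k => w s * k) := by
  classical
  simp only [Finsupp.prod, Finsupp.sum]
  exact OrdGE.prod _ _ _ (fun s _ => by
    have := (hv s).pow (ν s)
    simpa [mul_comm] using this)

lemma deg_le_wsum (v : σ → MvPowerSeries τ ℂ) (w : σ → ℕ) (hw : ∀ s, 1 ≤ w s) (ν : σ →₀ ℕ) :
    deg ν ≤ ν.sum fun s k => w s * k := by
  classical
  rw [deg, Finsupp.sum, Finsupp.sum]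
  apply Finset.sum_le_sum
  intro s _
  calc ν s = 1 * ν s := (one_mul _).symm
  _ ≤ w s * ν s := Nat.mul_le_mul_right _ (hw s)

def bndF (σ : Type*) [Fintype σ] (m : ℕ) : σ →₀ ℕ := Finsupp.equivFunOnFinite.symm (fun _ => m)

lemma le_bndF [Fintype σ] {m : ℕ} {ν : σ →₀ ℕ} (h : deg ν ≤ m) : ν ≤ bndF σ m := by
  intro s
  exact le_trans (apply_le_deg ν s) h

lemma coeff_msubst [Fintype σ] [DecidableEq σ] (v : σ → MvPowerSeries τ ℂ)
    (hv : ∀ s, OrdGE (v s) 1) (P : MvPowerSeries σ ℂ) (μ : τ →₀ ℕ) :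
    MvPowerSeries.coeff μ (msubst v P)
      = ∑ ν ∈ Finset.Iic (bndF σ (deg μ)), (MvPowerSeries.coeff ν P) *
        (MvPowerSeries.coeff μ (ν.prod fun s k => v s ^ k)) := by
  apply tsum_eq_sum
  intro ν hν
  have hdeg : ¬ deg ν ≤ deg μ := by
    intro h
    exact hν (Finset.mem_Iic.2 (le_bndF h))
  have := ordGE_prodpow v (fun _ => 1) hv ν μ
  rw [this (by
    have h2 : (ν.sum fun s k => 1 * k) = deg ν := by
      simp [deg]
    omega), mul_zero]

lemma msubst_add [Fintype σ] [DecidableEq σ] (v : σ → MvPowerSeries τ ℂ)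
    (hv : ∀ s, OrdGE (v s) 1) (P Q : MvPowerSeries σ ℂ) :
    msubst v (P + Q) = msubst v P + msubst v Q := by
  ext μ
  rw [map_add, coeff_msubst v hv, coeff_msubst v hv, coeff_msubst v hv,
    ← Finset.sum_add_distrib]
  apply Finset.sum_congr rfl
  intro ν _
  rw [map_add]; ring

lemma msubst_sub [Fintype σ] [DecidableEq σ] (v : σ → MvPowerSeries τ ℂ)
    (hv : ∀ s, OrdGE (v s) 1) (P Q : MvPowerSeries σ ℂ) :
    msubst v (P - Q) = msubst v P - msubst v Q := by
  ext μ
  rw [map_sub, coeff_msubst v hv, coeff_msubst v hv, coeff_msubst v hv,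
    ← Finset.sum_sub_distrib]
  apply Finset.sum_congr rfl
  intro ν _
  rw [map_sub]; ring

lemma msubst_X [DecidableEq σ] (v : σ → MvPowerSeries τ ℂ) (s : σ) :
    msubst v (MvPowerSeries.X s) = v s := by
  classical
  ext μ
  show (∑' ν : σ →₀ ℕ, _) = _
  rw [tsum_eq_single (Finsupp.single s 1)]
  · rw [MvPowerSeries.coeff_X, if_pos rfl, one_mul,
      Finsupp.prod_single_index (by simp), pow_one]
  · intro ν hν
    rw [MvPowerSeries.coeff_X, if_neg hν, zero_mul]

lemma msubst_ordGE [Fintype σ] [DecidableEq σ] (v : σ → MvPowerSeries τ ℂ) (w : σ → ℕ)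
    (hw : ∀ s, 1 ≤ w s) (hv : ∀ s, OrdGE (v s) (w s)) (P : MvPowerSeries σ ℂ) (m : ℕ)
    (hP : ∀ ν : σ →₀ ℕ, (ν.sum fun s k => w s * k) < m → MvPowerSeries.coeff ν P = 0) :
    OrdGE (msubst v P) m := by
  intro μ hμ
  rw [coeff_msubst v (fun s => (hv s).mono (hw s)) P μ]
  apply Finset.sum_eq_zero
  intro ν _
  by_cases h : (ν.sum fun s k => w s * k) < m
  · rw [hP ν h, zero_mul]
  · rw [ordGE_prodpow v w hv ν μ (by
      have := deg_le_wsum v w hw ν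
      omega), mul_zero]

/-- coefficientwise conjugation -/
def conjC (P : MvPowerSeries σ ℂ) : MvPowerSeries σ ℂ :=
  fun ν => starRingEnd ℂ (MvPowerSeries.coeff ν P)

lemma coeff_conjC (P : MvPowerSeries σ ℂ) (ν : σ →₀ ℕ) :
    MvPowerSeries.coeff ν (conjC P) = starRingEnd ℂ (MvPowerSeries.coeff ν P) := rfl

lemma barT_eq_conjC_swap (P : MvPowerSeries (Fin n ⊕ Fin n) ℂ) (ν : (Fin n ⊕ Fin n) →₀ ℕ) :
    MvPowerSeries.coeff ν (barT P) = MvPowerSeries.coeff (sw ν) (conjC P) := rfl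

lemma ordGE_barT {P : MvPowerSeries (Fin n ⊕ Fin n) ℂ} {m : ℕ} (hP : OrdGE P m) :
    OrdGE (barT P) m := by
  intro μ hμ
  rw [coeff_barT, hP (sw μ) (by rwa [deg_sw]), map_zero]

lemma barT_msubst [Fintype σ] [DecidableEq σ] (v : σ → MvPowerSeries (Fin n ⊕ Fin n) ℂ)
    (hv : ∀ s, OrdGE (v s) 1) (P : MvPowerSeries σ ℂ) :
    barT (msubst v P) = msubst (fun s => barT (v s)) (conjC P) := by
  classical
  ext μ
  rw [coeff_barT, coeff_msubst v hv, coeff_msubst (fun s => barT (v s))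
    (fun s => ordGE_barT (hv s)), map_sum, deg_sw]
  apply Finset.sum_congr rfl
  intro ν _
  rw [map_mul, coeff_conjC]
  congr 1
  rw [← coeff_barT]
  congr 1
  simp only [Finsupp.prod]
  rw [barT_prod]
  apply Finset.prod_congr rfl
  intro s _
  rw [barT_pow]

/-- substitution after precomposition with the swap of `Fin n ⊕ Fin n` -/
lemma msubst_swap_eq (V : (Fin n ⊕ Fin n) → MvPowerSeries (Fin n ⊕ Fin n) ℂ)
    (hV : ∀ s, OrdGE (V s) 1) (Q : MvPowerSeries (Fin n ⊕ Fin n) ℂ) :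
    msubst (fun s => V (Equiv.sumComm (Fin n) (Fin n) s)) Q
      = msubst V (fun ν => Q (sw ν)) := by
  classical
  ext μ
  rw [coeff_msubst _ (fun s => hV _), coeff_msubst V hV (fun ν => Q (sw ν)) μ]
  have hbnd : ∀ (s : Fin n ⊕ Fin n), bndF (Fin n ⊕ Fin n) (deg μ) s = deg μ := by
    intro s; simp [bndF]
  refine Finset.sum_nbij' (fun ν => sw ν) (fun ν => sw ν) ?_ ?_
    (fun ν _ => sw_sw ν) (fun ν _ => sw_sw ν) ?_
  · intro ν hν
    rw [Finset.mem_Iic, Finsupp.le_def] at hν ⊢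
    intro s
    rw [sw_apply, hbnd]
    exact le_trans (hν _) (le_of_eq (hbnd _))
  · intro ν hν
    rw [Finset.mem_Iic, Finsupp.le_def] at hν ⊢
    intro s
    rw [sw_apply, hbnd]
    exact le_trans (hν _) (le_of_eq (hbnd _))
  · intro ν _
    congr 1
    · show MvPowerSeries.coeff ν Q = Q (sw (sw ν))
      rw [sw_sw]
      rfl
    · congr 1
      rw [Finsupp.prod_fintype _ _ (fun s => pow_zero _),
        Finsupp.prod_fintype _ _ (fun s => pow_zero _)]
      rw [← Equiv.prod_comp (Equiv.sumComm (Fin n) (Fin n))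
        (fun s => V s ^ (sw ν) s)]
      apply Finset.prod_congr rfl
      intro s _
      congr 1
      rw [sw_apply]
      congr 1
      cases s <;> rfl


variable {σ τ : Type*} {n : ℕ}

lemma monomial_prod {ι : Type*} (s : Finset ι) (m : ι → (τ →₀ ℕ)) :
    ∏ i ∈ s, MvPowerSeries.monomial (m i) (1 : ℂ) = MvPowerSeries.monomial (∑ i ∈ s, m i) 1 := by
  classical
  induction s using Finset.induction with
  | empty => simp
  | insert _ _ hx ih =>
      rw [Finset.prod_insert hx, Finset.sum_insert hx, ih, MvPowerSeries.monomial_mul_monomial,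
        one_mul]

def zpart (ν : (Fin n ⊕ Unit) →₀ ℕ) : Fin n →₀ ℕ :=
  Finsupp.equivFunOnFinite.symm (fun i => ν (Sum.inl i))

lemma zpart_apply (ν : (Fin n ⊕ Unit) →₀ ℕ) (i : Fin n) : zpart ν i = ν (Sum.inl i) := rfl

lemma deg_fintype [Fintype σ] (ν : σ →₀ ℕ) : deg ν = ∑ s : σ, ν s := by
  classical
  rw [deg, Finsupp.sum_fintype]
  simp

lemma wdeg_eq (ν : (Fin n ⊕ Unit) →₀ ℕ) : wdeg ν = deg (zpart ν) + 2 * ν (Sum.inr ()) := by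
  classical
  rw [wdeg, Finsupp.sum_fintype _ _ (fun s => by simp), Fintype.sum_sum_type, deg_fintype]
  simp [zpart_apply]

lemma zmon_zero_right_apply (I : Fin n →₀ ℕ) :
    ∀ s, zmon I 0 s = Sum.elim (fun i => I i) (fun _ => 0) s := by
  intro s
  cases s with
  | inl i => rw [zmon_apply_inl]; rfl
  | inr i => rw [zmon_apply_inr]; rfl

lemma prodW_decomp (Φ : MvPowerSeries (Fin n ⊕ Fin n) ℂ) (ν : (Fin n ⊕ Unit) →₀ ℕ) :
    (ν.prod fun s k => (Sum.elim (fun i => MvPowerSeries.X (Sum.inl i)) (fun _ => Φ) s) ^ k)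
      = MvPowerSeries.monomial (zmon (zpart ν) 0) 1 * Φ ^ (ν (Sum.inr ())) := by
  classical
  rw [Finsupp.prod_fintype _ _ (fun s => pow_zero _), Fintype.prod_sum_type]
  simp only [Sum.elim_inl, Sum.elim_inr, MvPowerSeries.X_pow_eq]
  rw [monomial_prod, Fintype.prod_unique]
  have heq : (∑ i : Fin n, Finsupp.single (Sum.inl i : Fin n ⊕ Fin n) (ν (Sum.inl i)))
      = zmon (zpart ν) 0 := by
    ext s
    rw [Finset.sum_apply', zmon_zero_right_apply]
    cases s with
    | inl j =>
        simp only [Sum.elim_inl]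
        rw [Finset.sum_eq_single j (fun b _ hb => by
          rw [Finsupp.single_apply, if_neg (by simpa using hb)]) (by simp)]
        rw [Finsupp.single_apply, if_pos rfl, zpart_apply]
    | inr j =>
        simp only [Sum.elim_inr]
        apply Finset.sum_eq_zero
        intro b _
        rw [Finsupp.single_apply, if_neg (by simp)]
  rw [heq]

lemma prodW_decomp_bar (Φ : MvPowerSeries (Fin n ⊕ Fin n) ℂ) (ν : (Fin n ⊕ Unit) →₀ ℕ) :
    (ν.prod fun s k => (Sum.elim (fun i => MvPowerSeries.X (Sum.inr i)) (fun _ => Φ) s) ^ k)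
      = MvPowerSeries.monomial (zmon 0 (zpart ν)) 1 * Φ ^ (ν (Sum.inr ())) := by
  classical
  rw [Finsupp.prod_fintype _ _ (fun s => pow_zero _), Fintype.prod_sum_type]
  simp only [Sum.elim_inl, Sum.elim_inr, MvPowerSeries.X_pow_eq]
  rw [monomial_prod, Fintype.prod_unique]
  have heq : (∑ i : Fin n, Finsupp.single (Sum.inr i : Fin n ⊕ Fin n) (ν (Sum.inl i)))
      = zmon 0 (zpart ν) := by
    ext s
    rw [Finset.sum_apply']
    cases s with
    | inl j =>
        rw [zmon_apply_inl]
        simp only [Finsupp.coe_zero, Pi.zero_apply]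
        apply Finset.sum_eq_zero
        intro b _
        rw [Finsupp.single_apply, if_neg (by simp)]
    | inr j =>
        rw [zmon_apply_inr, zpart_apply]
        rw [Finset.sum_eq_single j (fun b _ hb => by
          rw [Finsupp.single_apply, if_neg (by simpa using hb)]) (by simp)]
        rw [Finsupp.single_apply, if_pos rfl]
  rw [heq]

lemma ordGE_uS : OrdGE (uS n) 2 := homog_uS.ordGE

lemma subV_ord {Φ : MvPowerSeries (Fin n ⊕ Fin n) ℂ} (hΦ : OrdGE Φ 2) :
    ∀ s : Fin n ⊕ Unit,
    OrdGE ((Sum.elim (fun i => MvPowerSeries.X (Sum.inl i)) (fun _ => Φ)) s) 1 := by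
  rintro (i | u)
  · exact (IsHomog.X _).ordGE
  · exact hΦ.mono (by omega)

lemma subVbar_ord {Φ : MvPowerSeries (Fin n ⊕ Fin n) ℂ} (hΦ : OrdGE Φ 2) :
    ∀ s : Fin n ⊕ Unit,
    OrdGE ((Sum.elim (fun i => MvPowerSeries.X (Sum.inr i)) (fun _ => Φ)) s) 1 := by
  rintro (i | u)
  · exact (IsHomog.X _).ordGE
  · exact hΦ.mono (by omega)

lemma substZW_add {Φ : MvPowerSeries (Fin n ⊕ Fin n) ℂ} (hΦ : OrdGE Φ 2)
    (P Q : MvPowerSeries (Fin n ⊕ Unit) ℂ) :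
    substZW Φ (P + Q) = substZW Φ P + substZW Φ Q :=
  msubst_add _ (subV_ord hΦ) P Q

lemma substZW_X (Φ : MvPowerSeries (Fin n ⊕ Fin n) ℂ) :
    substZW Φ (MvPowerSeries.X (Sum.inr ())) = Φ := by
  rw [substZW, msubst_X]
  rfl

lemma substZW_ordGE {Φ : MvPowerSeries (Fin n ⊕ Fin n) ℂ} (hΦ : OrdGE Φ 2)
    (P : MvPowerSeries (Fin n ⊕ Unit) ℂ) (m : ℕ) (hP : OrdWtGE P m) :
    OrdGE (substZW Φ P) m := by
  have hw : ∀ s : Fin n ⊕ Unit, 1 ≤ Sum.elim (fun _ => 1) (fun _ => 2) s := by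
    rintro (i | u) <;> simp
  have hv : ∀ s : Fin n ⊕ Unit,
      OrdGE ((Sum.elim (fun i => MvPowerSeries.X (Sum.inl i)) (fun _ => Φ)) s)
        (Sum.elim (fun _ => 1) (fun _ => 2) s) := by
    rintro (i | u)
    · exact (IsHomog.X _).ordGE
    · exact hΦ
  exact msubst_ordGE _ _ hw hv P m (fun ν hν => hP ν hν)

lemma barT_substZW {Φ : MvPowerSeries (Fin n ⊕ Fin n) ℂ} (hΦ : OrdGE Φ 2)
    (hreal : barT Φ = Φ) (P : MvPowerSeries (Fin n ⊕ Unit) ℂ) :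
    barT (substZW Φ P)
      = msubst (Sum.elim (fun i => MvPowerSeries.X (Sum.inr i)) (fun _ => Φ)) (conjC P) := by
  have hfun : (fun s : Fin n ⊕ Unit => barT ((Sum.elim (fun i => MvPowerSeries.X (Sum.inl i)) (fun _ => Φ)) s))
      = Sum.elim (fun i => MvPowerSeries.X (Sum.inr i)) (fun _ => Φ) := by
    funext s
    cases s with
    | inl i => rw [Sum.elim_inl, Sum.elim_inl, barT_X_inl]
    | inr u => rw [Sum.elim_inr, Sum.elim_inr, hreal]
  rw [substZW, barT_msubst _ (subV_ord hΦ), hfun]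

lemma pow_sub_pow_ord {Φ : MvPowerSeries (Fin n ⊕ Fin n) ℂ}
    (hΦ : OrdGE Φ 2) (hE : OrdGE (Φ - uS n) 3) (k : ℕ) :
    OrdGE (Φ ^ k - uS n ^ k) (2 * k + 1) := by
  induction k with
  | zero => intro μ hμ; simp
  | succ k ih =>
      have key : Φ ^ (k+1) - uS n ^ (k+1)
          = Φ * (Φ ^ k - uS n ^ k) + (Φ - uS n) * uS n ^ k := by ring
      rw [key]
      apply OrdGE.add
      · exact (hΦ.mul ih).mono (by omega)
      · exact (hE.mul (ordGE_uS.pow k)).mono (by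
          have : k * 2 = 2 * k := by ring
          omega)


variable {n : ℕ}

lemma zmon_add (a b c d : Fin n →₀ ℕ) : zmon a b + zmon c d = zmon (a + c) (b + d) := by
  ext s
  cases s with
  | inl i => simp [zmon_apply_inl]
  | inr i => simp [zmon_apply_inr]

/-- the algebra map sending the i-th variable to `z_i z̄_i` -/
def Psi (n : ℕ) : MvPolynomial (Fin n) ℂ →ₐ[ℂ] MvPowerSeries (Fin n ⊕ Fin n) ℂ :=
  MvPolynomial.aeval (fun i => MvPowerSeries.X (Sum.inl i) * MvPowerSeries.X (Sum.inr i))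

lemma Psi_monomial (L : Fin n →₀ ℕ) (a : ℂ) :
    Psi n (MvPolynomial.monomial L a) = MvPowerSeries.monomial (zmon L L) a := by
  classical
  rw [Psi, MvPolynomial.aeval_monomial]
  have h1 : (L.prod fun i k =>
      (MvPowerSeries.X (Sum.inl i) * MvPowerSeries.X (Sum.inr i) : MvPowerSeries (Fin n ⊕ Fin n) ℂ) ^ k)
      = MvPowerSeries.monomial (zmon L L) 1 := by
    have h2 : ∀ i k, (MvPowerSeries.X (Sum.inl i) * MvPowerSeries.X (Sum.inr i) : MvPowerSeries (Fin n ⊕ Fin n) ℂ) ^ k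
        = MvPowerSeries.monomial (Finsupp.single (Sum.inl i) k + Finsupp.single (Sum.inr i) k) 1 := by
      intro i k
      rw [mul_pow, MvPowerSeries.X_pow_eq, MvPowerSeries.X_pow_eq,
        MvPowerSeries.monomial_mul_monomial, one_mul]
    simp only [Finsupp.prod]
    rw [Finset.prod_congr rfl (fun i _ => h2 i (L i)), monomial_prod]
    have heq : (∑ i ∈ L.support,
        (Finsupp.single (Sum.inl i : Fin n ⊕ Fin n) (L i) + Finsupp.single (Sum.inr i) (L i)))
        = zmon L L := by
      ext s
      rw [Finset.sum_apply']
      cases s with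
      | inl j =>
          rw [zmon_apply_inl]
          by_cases hj : j ∈ L.support
          · rw [Finset.sum_eq_single j (fun b _ hb => by
              simp [Finsupp.single_apply, Finsupp.add_apply, hb, (by simpa using hb : b ≠ j)])
              (fun h => absurd hj h)]
            simp [Finsupp.single_apply]
          · rw [Finset.sum_eq_zero (fun b hb => by
              have : b ≠ j := fun hc => hj (hc ▸ hb)
              simp [Finsupp.single_apply, this])]
            rw [Finsupp.notMem_support_iff.1 hj]
      | inr j =>
          rw [zmon_apply_inr]
          by_cases hj : j ∈ L.support
          · rw [Finset.sum_eq_single j (fun b _ hb => by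
              simp [Finsupp.single_apply, Finsupp.add_apply, hb, (by simpa using hb : b ≠ j)])
              (fun h => absurd hj h)]
            simp [Finsupp.single_apply]
          · rw [Finset.sum_eq_zero (fun b hb => by
              have : b ≠ j := fun hc => hj (hc ▸ hb)
              simp [Finsupp.single_apply, this])]
            rw [Finsupp.notMem_support_iff.1 hj]
    rw [heq]
  rw [h1]
  have : (algebraMap ℂ (MvPowerSeries (Fin n ⊕ Fin n) ℂ)) a
      = MvPowerSeries.monomial 0 a := rfl
  rw [this, MvPowerSeries.monomial_mul_monomial, zero_add, mul_one]

lemma Psi_eq_sum (q : MvPolynomial (Fin n) ℂ) :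
    Psi n q = ∑ L ∈ q.support, MvPowerSeries.monomial (zmon L L) (MvPolynomial.coeff L q) := by
  conv_lhs => rw [q.as_sum]
  rw [map_sum]
  exact Finset.sum_congr rfl (fun L _ => Psi_monomial L _)

/-- the linear polynomials corresponding to `vb` -/
def lin (n : ℕ) [NeZero n] (h : Fin n) : MvPolynomial (Fin n) ℂ :=
  if h = 0 then ∑ i : Fin n, MvPolynomial.X i
  else (∑ i ∈ Finset.univ.filter (fun i : Fin n => i < h), MvPolynomial.X i) - MvPolynomial.X h

lemma Psi_lin [NeZero n] (h : Fin n) : Psi n (lin n h) = vb n h := by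
  by_cases h0 : h = 0
  · subst h0
    simp only [lin, if_pos rfl, vb, if_pos rfl, if_true, map_sum, uS]
    apply Finset.sum_congr rfl
    intro i _
    rw [Psi, MvPolynomial.aeval_X]
  · simp only [lin, if_neg h0, vb, if_neg h0, map_sub, map_sum]
    congr 1
    · apply Finset.sum_congr rfl
      intro i _
      rw [Psi, MvPolynomial.aeval_X]
    · rw [Psi, MvPolynomial.aeval_X]

/-- product of the `lin` polynomials -/
def linK (n : ℕ) [NeZero n] (K : Fin n →₀ ℕ) : MvPolynomial (Fin n) ℂ :=
  K.prod fun h k => lin n h ^ k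

lemma Psi_linK [NeZero n] (K : Fin n →₀ ℕ) :
    Psi n (linK n K) = K.prod fun h k => vb n h ^ k := by
  classical
  rw [linK]
  simp only [Finsupp.prod]
  rw [map_prod]
  apply Finset.prod_congr rfl
  intro h _
  rw [map_pow, Psi_lin]

/-- the key coefficient computation -/
lemma coeff_term_special [NeZero n] {I J I' J' : Fin n →₀ ℕ} (L K' : Fin n →₀ ℕ)
    (hIJ : ∀ l, I l = 0 ∨ J l = 0) (hIJ' : ∀ l, I' l = 0 ∨ J' l = 0) :
    MvPowerSeries.coeff (zmon (I + L) (J + L)) (term I' J' K')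
      = if I' = I ∧ J' = J then MvPolynomial.coeff L (linK n K') else 0 := by
  classical
  rw [term, ← Psi_linK, Psi_eq_sum, Finset.mul_sum, map_sum]
  have hco : ∀ L' : Fin n →₀ ℕ,
      (MvPowerSeries.monomial (zmon I' J') 1 *
        MvPowerSeries.monomial (zmon L' L') (MvPolynomial.coeff L' (linK n K')))
      = MvPowerSeries.monomial (zmon (I' + L') (J' + L')) (MvPolynomial.coeff L' (linK n K')) := by
    intro L'
    rw [MvPowerSeries.monomial_mul_monomial, zmon_add, one_mul]
  rw [Finset.sum_congr rfl (fun L' _ => by rw [hco L', MvPowerSeries.coeff_monomial])]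
  have key : ∀ L' : Fin n →₀ ℕ, zmon (I + L) (J + L) = zmon (I' + L') (J' + L')
      ↔ (I' = I ∧ J' = J ∧ L' = L) := by
    intro L'
    constructor
    · intro hz
      obtain ⟨h1, h2⟩ := zmon_inj hz
      have c1 : ∀ l, I l + L l = I' l + L' l := fun l => by
        have := congrArg (fun v => v l) h1; simpa using this
      have c2 : ∀ l, J l + L l = J' l + L' l := fun l => by
        have := congrArg (fun v => v l) h2; simpa using this
      have hI : ∀ l, I' l = I l ∧ J' l = J l ∧ L' l = L l := by
        intro l
        have := c1 l; have := c2 l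
        rcases hIJ l with h | h <;> rcases hIJ' l with h' | h' <;> omega
      exact ⟨Finsupp.ext (fun l => (hI l).1), Finsupp.ext (fun l => (hI l).2.1),
        Finsupp.ext (fun l => (hI l).2.2)⟩
    · rintro ⟨rfl, rfl, rfl⟩
      rfl
  by_cases hmain : I' = I ∧ J' = J
  · rw [if_pos hmain]
    by_cases hL : L ∈ (linK n K').support
    · rw [Finset.sum_eq_single L (fun L' _ hL' => by
        rw [if_neg (fun hc => hL' ((key L').1 hc).2.2)]) (fun h => absurd hL h)]
      rw [if_pos ((key L).2 ⟨hmain.1, hmain.2, rfl⟩)]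
    · rw [Finset.sum_eq_zero (fun L' hL' => by
        rw [if_neg (fun hc => by
          have := (key L').1 hc
          exact hL (this.2.2 ▸ hL'))]),
        MvPolynomial.notMem_support_iff.1 hL]
  · rw [if_neg hmain]
    apply Finset.sum_eq_zero
    intro L' _
    rw [if_neg (fun hc => hmain ⟨((key L').1 hc).1, ((key L').1 hc).2.1⟩)]


variable {n : ℕ}

def xx (x : Fin n → ℂ) (j : ℕ) : ℂ := if h : j < n then x ⟨j, h⟩ else 0

def tseq (x : Fin n → ℂ) : ℕ → ℂ
  | 0 => xx x 0
  | (k+1) => (xx x (n - 1 - k) + tseq x k) / 2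

def sseq (x : Fin n → ℂ) (h : ℕ) : ℂ := if h = 0 then 0 else tseq x (n - h)

def ptN (x : Fin n → ℂ) (j : ℕ) : ℂ := sseq x (j + 1) - sseq x j

def pt (x : Fin n → ℂ) : Fin n → ℂ := fun i => ptN x (i : ℕ)

lemma ptN_sum (x : Fin n → ℂ) (h : ℕ) : ∑ j ∈ Finset.range h, ptN x j = sseq x h := by
  have := Finset.sum_range_sub (fun j => sseq x j) h
  rw [show ∑ j ∈ Finset.range h, ptN x j = ∑ j ∈ Finset.range h, (sseq x (j+1) - sseq x j) from rfl,
    this]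
  simp [sseq]

lemma sseq_key [NeZero n] (x : Fin n → ℂ) (h : Fin n) (hh : h ≠ 0) :
    2 * sseq x (h : ℕ) - sseq x ((h : ℕ) + 1) = x h := by
  have h1 : 1 ≤ (h : ℕ) := by
    rcases Nat.eq_zero_or_pos (h : ℕ) with h0 | h0
    · exact absurd (Fin.ext h0) hh
    · omega
  have h2 : (h : ℕ) ≤ n - 1 := by
    have := h.isLt; omega
  have hn : 1 ≤ n := Nat.one_le_iff_ne_zero.2 (NeZero.ne n)
  have e1 : n - (h : ℕ) = (n - 1 - (h : ℕ)) + 1 := by omega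
  have e2 : n - ((h : ℕ) + 1) = n - 1 - (h : ℕ) := by omega
  have e3 : n - 1 - (n - 1 - (h : ℕ)) = (h : ℕ) := by omega
  rw [sseq, if_neg (by omega), sseq, if_neg (by omega), e1, e2]
  rw [show tseq x ((n - 1 - (h : ℕ)) + 1) = (xx x (n - 1 - (n - 1 - (h:ℕ))) + tseq x (n - 1 - (h:ℕ))) / 2 from rfl]
  rw [e3]
  have : xx x (h : ℕ) = x h := by
    rw [xx, dif_pos h.isLt]
  rw [this]
  ring

lemma sseq_n [NeZero n] (x : Fin n → ℂ) : sseq x n = x ⟨0, Nat.pos_of_ne_zero (NeZero.ne n)⟩ := by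
  have hn : n ≠ 0 := NeZero.ne n
  rw [sseq, if_neg hn, Nat.sub_self]
  rw [show tseq x 0 = xx x 0 from rfl, xx, dif_pos (Nat.pos_of_ne_zero hn)]

lemma eval_lin [NeZero n] (x : Fin n → ℂ) (h : Fin n) :
    MvPolynomial.eval (pt x) (lin n h) = x h := by
  classical
  by_cases h0 : h = 0
  · subst h0
    rw [lin, if_pos rfl, map_sum]
    have : ∀ i : Fin n, MvPolynomial.eval (pt x) (MvPolynomial.X i) = ptN x (i : ℕ) := by
      intro i; rw [MvPolynomial.eval_X]; rfl
    rw [Finset.sum_congr rfl (fun i _ => this i),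
      Fin.sum_univ_eq_sum_range (fun j => ptN x j) n, ptN_sum, sseq_n]
    congr 1
  · rw [lin, if_neg h0, map_sub, map_sum, MvPolynomial.eval_X]
    have hfil : ∑ i ∈ Finset.univ.filter (fun i : Fin n => i < h),
        MvPolynomial.eval (pt x) (MvPolynomial.X i) = sseq x (h : ℕ) := by
      rw [Finset.sum_filter]
      have : ∀ i : Fin n, (if i < h then MvPolynomial.eval (pt x) (MvPolynomial.X i) else 0)
          = (fun j => if j < (h : ℕ) then ptN x j else 0) (i : ℕ) := by
        intro i
        show _ = if (i : ℕ) < (h : ℕ) then ptN x (i : ℕ) else 0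
        rw [MvPolynomial.eval_X]
        by_cases hi : i < h
        · rw [if_pos hi, if_pos (show (i : ℕ) < (h : ℕ) from hi)]
          rfl
        · rw [if_neg hi, if_neg (show ¬((i : ℕ) < (h : ℕ)) from fun hc => hi hc)]
      rw [Finset.sum_congr rfl (fun i _ => this i),
        Fin.sum_univ_eq_sum_range (fun j => if j < (h : ℕ) then ptN x j else 0) n]
      rw [← Finset.sum_subset (Finset.range_subset_range.2 (le_of_lt h.isLt))
        (fun j _ hj => if_neg (fun hc => hj (Finset.mem_range.2 hc)))]
      rw [Finset.sum_congr rfl (fun j hj => if_pos (Finset.mem_range.1 hj)), ptN_sum]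
    rw [hfil]
    show sseq x (h : ℕ) - (sseq x ((h : ℕ) + 1) - sseq x (h : ℕ)) = x h
    linear_combination sseq_key x h h0

lemma eval_linK [NeZero n] (x : Fin n → ℂ) (K : Fin n →₀ ℕ) :
    MvPolynomial.eval (pt x) (linK n K) = K.prod fun h k => x h ^ k := by
  classical
  rw [linK]
  simp only [Finsupp.prod]
  rw [map_prod]
  apply Finset.prod_congr rfl
  intro h _
  rw [map_pow, eval_lin]

/-- **Independence of the basis expansion** -/
lemma indep [NeZero n]
    (S : Finset ((Fin n →₀ ℕ) × (Fin n →₀ ℕ) × (Fin n →₀ ℕ)))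
    (dd : ((Fin n →₀ ℕ) × (Fin n →₀ ℕ) × (Fin n →₀ ℕ)) → ℂ)
    (hdisj : ∀ t ∈ S, ∀ l, t.1 l = 0 ∨ t.2.1 l = 0)
    (hsum : ∀ μ, ∑ t ∈ S, dd t * MvPowerSeries.coeff μ (term t.1 t.2.1 t.2.2) = 0) :
    ∀ t ∈ S, dd t = 0 := by
  classical
  rintro ⟨I, J, K₀⟩ htS
  have hd : ∀ l, I l = 0 ∨ J l = 0 := hdisj _ htS
  set Sf := S.filter (fun t => t.1 = I ∧ t.2.1 = J) with hSf
  have hq : ∀ L : Fin n →₀ ℕ, ∑ t ∈ Sf, dd t * MvPolynomial.coeff L (linK n t.2.2) = 0 := by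
    intro L
    have := hsum (zmon (I + L) (J + L))
    rw [Finset.sum_congr rfl (fun t ht => by
      rw [coeff_term_special L t.2.2 hd (hdisj t ht)])] at this
    rw [hSf, Finset.sum_filter]
    refine Eq.trans ?_ this
    apply Finset.sum_congr rfl
    intro t _
    by_cases hc : t.1 = I ∧ t.2.1 = J
    · rw [if_pos hc, if_pos hc]
    · rw [if_neg hc, if_neg hc, mul_zero]
  have hq0 : (∑ t ∈ Sf, dd t • linK n t.2.2) = 0 := by
    apply MvPolynomial.ext
    intro L
    rw [MvPolynomial.coeff_sum]
    simp only [MvPolynomial.coeff_smul, smul_eq_mul]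
    rw [hq L]
    simp
  have hq2 : (∑ t ∈ Sf, dd t • MvPolynomial.monomial t.2.2 (1 : ℂ)) = 0 := by
    apply MvPolynomial.funext
    intro x
    rw [map_sum, map_zero]
    have : ∀ t ∈ Sf, MvPolynomial.eval x (dd t • MvPolynomial.monomial t.2.2 (1 : ℂ))
        = MvPolynomial.eval (pt x) (dd t • linK n t.2.2) := by
      intro t _
      rw [MvPolynomial.smul_eval, MvPolynomial.smul_eval, MvPolynomial.eval_monomial,
        eval_linK, one_mul]
    rw [Finset.sum_congr rfl this, ← map_sum, hq0, map_zero]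
  have hco := congrArg (MvPolynomial.coeff K₀) hq2
  rw [MvPolynomial.coeff_sum] at hco
  simp only [MvPolynomial.coeff_smul, MvPolynomial.coeff_monomial, smul_eq_mul,
    MvPolynomial.coeff_zero] at hco
  rw [Finset.sum_eq_single ((I, J, K₀) : (Fin n →₀ ℕ) × (Fin n →₀ ℕ) × (Fin n →₀ ℕ))] at hco
  · rw [if_pos rfl, mul_one] at hco
    exact hco
  · rintro ⟨I', J', K'⟩ ht hne
    rw [hSf, Finset.mem_filter] at ht
    obtain ⟨-, h1, h2⟩ := ht
    simp only at h1 h2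
    subst h1; subst h2
    have : K' ≠ K₀ := fun hc => hne (by rw [hc])
    rw [if_neg this, mul_zero]
  · intro hnotin
    exfalso
    apply hnotin
    rw [hSf, Finset.mem_filter]
    exact ⟨htS, rfl, rfl⟩


variable {n : ℕ}

/-- build an exponent on `Fin n ⊕ Unit` from a z-part and a w-exponent -/
def iota (I : Fin n →₀ ℕ) (k : ℕ) : (Fin n ⊕ Unit) →₀ ℕ :=
  I.mapDomain Sum.inl + Finsupp.single (Sum.inr ()) k

lemma iota_inl (I : Fin n →₀ ℕ) (k : ℕ) (i : Fin n) : iota I k (Sum.inl i) = I i := by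
  classical
  rw [iota, Finsupp.add_apply, Finsupp.mapDomain_apply Sum.inl_injective,
    Finsupp.single_apply, if_neg (by simp)]
  simp

lemma iota_inr (I : Fin n →₀ ℕ) (k : ℕ) : iota I k (Sum.inr ()) = k := by
  classical
  rw [iota, Finsupp.add_apply, Finsupp.mapDomain_notin_range _ _ (by
    rintro ⟨j, hj⟩; exact Sum.inl_ne_inr hj), Finsupp.single_apply, if_pos rfl]
  simp

lemma zpart_iota (I : Fin n →₀ ℕ) (k : ℕ) : zpart (iota I k) = I := by
  ext i; rw [zpart_apply, iota_inl]

lemma iota_zpart (ν : (Fin n ⊕ Unit) →₀ ℕ) : iota (zpart ν) (ν (Sum.inr ())) = ν := by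
  ext s
  cases s with
  | inl i => rw [iota_inl, zpart_apply]
  | inr u => cases u; rw [iota_inr]

lemma wdeg_iota (I : Fin n →₀ ℕ) (k : ℕ) : wdeg (iota I k) = deg I + 2 * k := by
  rw [wdeg_eq, zpart_iota, iota_inr]

lemma term_pure_left [NeZero n] (I : Fin n →₀ ℕ) (k : ℕ) :
    term I 0 (Finsupp.single 0 k) = MvPowerSeries.monomial (zmon I 0) 1 * uS n ^ k := by
  rw [term, vbpow_single]

lemma term_pure_right [NeZero n] (I : Fin n →₀ ℕ) (k : ℕ) :
    term 0 I (Finsupp.single 0 k) = MvPowerSeries.monomial (zmon 0 I) 1 * uS n ^ k := by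
  rw [term, vbpow_single]

/-- pair-indexed formula for coefficients of `substZW` -/
lemma coeff_substZW_pairs {Φ : MvPowerSeries (Fin n ⊕ Fin n) ℂ} (hΦ : OrdGE Φ 2)
    (P : MvPowerSeries (Fin n ⊕ Unit) ℂ) (μ : (Fin n ⊕ Fin n) →₀ ℕ) :
    MvPowerSeries.coeff μ (substZW Φ P)
      = ∑ p ∈ (Finset.Iic (bnd (deg μ)) ×ˢ Finset.range (deg μ + 1)),
          MvPowerSeries.coeff (iota p.1 p.2) P *
            MvPowerSeries.coeff μ (MvPowerSeries.monomial (zmon p.1 0) 1 * Φ ^ p.2) := by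
  classical
  rw [substZW, coeff_msubst _ (subV_ord hΦ)]
  refine Finset.sum_nbij' (fun ν => (zpart ν, ν (Sum.inr ()))) (fun p => iota p.1 p.2)
    ?_ ?_ ?_ ?_ ?_
  · intro ν hν
    rw [Finset.mem_Iic] at hν
    rw [Finset.mem_product, Finset.mem_Iic, Finset.mem_range]
    constructor
    · intro i
      rw [zpart_apply]
      exact le_trans (hν (Sum.inl i)) (by simp [bndF, bnd])
    · have := hν (Sum.inr ())
      have hb : bndF (Fin n ⊕ Unit) (deg μ) (Sum.inr ()) = deg μ := by simp [bndF]
      omega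
  · intro p hp
    rw [Finset.mem_product, Finset.mem_Iic, Finset.mem_range] at hp
    rw [Finset.mem_Iic]
    intro s
    have hb : bndF (Fin n ⊕ Unit) (deg μ) s = deg μ := by simp [bndF]
    rw [hb]
    cases s with
    | inl i =>
        rw [iota_inl]
        exact le_trans (hp.1 i) (by simp [bnd])
    | inr u =>
        cases u
        rw [iota_inr]
        omega
  · intro ν _; exact iota_zpart ν
  · intro p _; rw [zpart_iota, iota_inr]
  · intro ν _
    rw [iota_zpart, prodW_decomp]

/-- pair-indexed formula for the coefficients of `barT (substZW Φ P)` -/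
lemma coeff_barT_substZW_pairs {Φ : MvPowerSeries (Fin n ⊕ Fin n) ℂ} (hΦ : OrdGE Φ 2)
    (hreal : barT Φ = Φ) (P : MvPowerSeries (Fin n ⊕ Unit) ℂ) (μ : (Fin n ⊕ Fin n) →₀ ℕ) :
    MvPowerSeries.coeff μ (barT (substZW Φ P))
      = ∑ p ∈ (Finset.Iic (bnd (deg μ)) ×ˢ Finset.range (deg μ + 1)),
          starRingEnd ℂ (MvPowerSeries.coeff (iota p.1 p.2) P) *
            MvPowerSeries.coeff μ (MvPowerSeries.monomial (zmon 0 p.1) 1 * Φ ^ p.2) := by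
  classical
  rw [barT_substZW hΦ hreal, coeff_msubst _ (subVbar_ord hΦ)]
  refine Finset.sum_nbij' (fun ν => (zpart ν, ν (Sum.inr ()))) (fun p => iota p.1 p.2)
    ?_ ?_ ?_ ?_ ?_
  · intro ν hν
    rw [Finset.mem_Iic] at hν
    rw [Finset.mem_product, Finset.mem_Iic, Finset.mem_range]
    constructor
    · intro i
      rw [zpart_apply]
      exact le_trans (hν (Sum.inl i)) (by simp [bndF, bnd])
    · have := hν (Sum.inr ())
      have hb : bndF (Fin n ⊕ Unit) (deg μ) (Sum.inr ()) = deg μ := by simp [bndF]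
      omega
  · intro p hp
    rw [Finset.mem_product, Finset.mem_Iic, Finset.mem_range] at hp
    rw [Finset.mem_Iic]
    intro s
    have hb : bndF (Fin n ⊕ Unit) (deg μ) s = deg μ := by simp [bndF]
    rw [hb]
    cases s with
    | inl i =>
        rw [iota_inl]
        exact le_trans (hp.1 i) (by simp [bnd])
    | inr u =>
        cases u
        rw [iota_inr]
        omega
  · intro ν _; exact iota_zpart ν
  · intro p _; rw [zpart_iota, iota_inr]
  · intro ν _
    rw [iota_zpart, prodW_decomp_bar, coeff_conjC]

/-- leading behaviour of powers of a perturbed variable -/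
lemma pow_perturb (s : Fin n ⊕ Fin n) (ε : MvPowerSeries (Fin n ⊕ Fin n) ℂ)
    (hε : OrdGE ε 2) (k : ℕ) :
    ∃ err, (MvPowerSeries.X s + ε) ^ k
      = MvPowerSeries.monomial (Finsupp.single s k) 1 + err ∧ OrdGE err (k + 1) := by
  classical
  induction k with
  | zero =>
      refine ⟨0, by simp, OrdGE.zero 1⟩
  | succ k ih =>
      obtain ⟨e, he, hord⟩ := ih
      refine ⟨MvPowerSeries.monomial (Finsupp.single s k) 1 * ε
        + e * (MvPowerSeries.X s + ε), ?_, ?_⟩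
      · have hXmon : MvPowerSeries.monomial (Finsupp.single s k) (1:ℂ) * MvPowerSeries.X s
            = MvPowerSeries.monomial (Finsupp.single s (k+1)) 1 := by
          rw [show (MvPowerSeries.X s : MvPowerSeries (Fin n ⊕ Fin n) ℂ)
              = MvPowerSeries.monomial (Finsupp.single s 1) 1 from rfl,
            MvPowerSeries.monomial_mul_monomial, ← Finsupp.single_add, one_mul]
        rw [pow_succ, he, ← hXmon]
        ring
      · apply OrdGE.add
        · have h1 : OrdGE (MvPowerSeries.monomial (Finsupp.single s k) (1:ℂ)) k := by
            have := (IsHomog.monomial (Finsupp.single s k) (1:ℂ)).ordGE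
            rwa [deg_single] at this
          exact (h1.mul hε).mono (by omega)
        · have hX : OrdGE (MvPowerSeries.X s + ε : MvPowerSeries (Fin n ⊕ Fin n) ℂ) 1 :=
            (IsHomog.X s).ordGE.add (hε.mono (by omega))
          exact (hord.mul hX).mono (by omega)

/-- leading behaviour of the products `∏ V^ν` for tangent-to-identity `V` -/
lemma prod_perturb (V : (Fin n ⊕ Fin n) → MvPowerSeries (Fin n ⊕ Fin n) ℂ)
    (hV : ∀ s, ∃ ε, V s = MvPowerSeries.X s + ε ∧ OrdGE ε 2) (ν : (Fin n ⊕ Fin n) →₀ ℕ) :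
    ∃ err, (ν.prod fun s k => V s ^ k)
      = MvPowerSeries.monomial ν 1 + err ∧ OrdGE err (deg ν + 1) := by
  classical
  induction ν using Finsupp.induction with
  | zero =>
      refine ⟨0, by simp, OrdGE.zero 1⟩
  | single_add a b f ha hb ih =>
      obtain ⟨e, he, hord⟩ := ih
      obtain ⟨ε, hε, hεord⟩ := hV a
      obtain ⟨ea, hea, heaord⟩ := pow_perturb a ε hεord b
      have hsplit : ((Finsupp.single a b + f).prod fun s k => V s ^ k)
          = (V a ^ b) * (f.prod fun s k => V s ^ k) := by
        rw [Finsupp.prod_add_index' (fun s => pow_zero _) (fun s k1 k2 => pow_add _ _ _)]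
        congr 1
        exact Finsupp.prod_single_index (pow_zero _)
      rw [hsplit, hε, hea, he]
      refine ⟨MvPowerSeries.monomial (Finsupp.single a b) 1 * e
        + ea * (MvPowerSeries.monomial f 1 + e), ?_, ?_⟩
      · rw [add_mul, mul_add, MvPowerSeries.monomial_mul_monomial, one_mul]
        abel
      · rw [deg_add, deg_single]
        apply OrdGE.add
        · have h1 : OrdGE (MvPowerSeries.monomial (Finsupp.single a b) (1:ℂ)) b := by
            have := (IsHomog.monomial (Finsupp.single a b) (1:ℂ)).ordGE
            rwa [deg_single] at this
          exact (h1.mul hord).mono (by omega)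
        · have h2 : OrdGE (MvPowerSeries.monomial f (1:ℂ) + e) (deg f) :=
            (IsHomog.monomial f (1:ℂ)).ordGE.add (hord.mono (by omega))
          exact (heaord.mul h2).mono (by omega)


variable {n : ℕ}

lemma wPow_eq_iota (m : ℕ) : wPow n m = iota 0 m := by
  ext s
  cases s with
  | inl i =>
      rw [iota_inl, wPow, Finsupp.single_apply, if_neg (by simp)]
      simp
  | inr u =>
      cases u
      rw [iota_inr, wPow, Finsupp.single_apply, if_pos rfl]

lemma wdeg_zero : wdeg (0 : (Fin n ⊕ Unit) →₀ ℕ) = 0 := by simp [wdeg]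

lemma wdeg_eq_zero {ν : (Fin n ⊕ Unit) →₀ ℕ} (h : wdeg ν = 0) : ν = 0 := by
  rw [wdeg_eq] at h
  have h1 : deg (zpart ν) = 0 := by omega
  have h2 : ν (Sum.inr ()) = 0 := by omega
  rw [deg_eq_zero_iff] at h1
  have := iota_zpart ν
  rw [h1, h2] at this
  rw [← this]
  ext s
  cases s with
  | inl i => rw [iota_inl]; rfl
  | inr u => cases u; rw [iota_inr]; rfl


end CRS


open CRS in
/-- **Remark 2.4 (B).** If M : w = |z|² + E(z,z̄) with Ord(E) ≥ 3 and E formally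
real-valued, then in the unique normalized transformation (z+f, w+g) of Theorem 2.3
transforming M to its pseudo-normal form w' = |z'|² + φ, the w-component w + g(z,w)
depends only on w and has real coefficients, and φ is formally real-valued. -/
theorem real_manifold_real_normal_form (n : ℕ) (hn : 2 ≤ n) [NeZero n]
    (E : MvPowerSeries (Fin n ⊕ Fin n) ℂ) (hE : OrdGE E 3) (hreal : barT E = E)
    (f : Fin n → MvPowerSeries (Fin n ⊕ Unit) ℂ) (g : MvPowerSeries (Fin n ⊕ Unit) ℂ)
    (φ : MvPowerSeries (Fin n ⊕ Fin n) ℂ)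
    (hf : ∀ i, OrdWtGE (f i) 2) (hg : OrdWtGE g 3) (h26 : Norm26 f)
    (hφ : OrdGE φ 3) (h28 : Norm28' φ)
    (htr : Transforms E (fun i => MvPowerSeries.X (Sum.inl i) + f i)
      (MvPowerSeries.X (Sum.inr ()) + g) φ) :
    (∀ ν : (Fin n ⊕ Unit) →₀ ℕ, (∃ i : Fin n, ν (Sum.inl i) ≠ 0) →
      MvPowerSeries.coeff ν g = 0) ∧
    (∀ m : ℕ, starRingEnd ℂ (MvPowerSeries.coeff (wPow n m) g)
      = MvPowerSeries.coeff (wPow n m) g) ∧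
    barT φ = φ := by
  classical
  obtain ⟨c, hsupp, hφeq, hnorm⟩ := h28
  set Φ : MvPowerSeries (Fin n ⊕ Fin n) ℂ := uS n + E with hΦdef
  have hE2 : OrdGE E 2 := hE.mono (by omega)
  have hΦ2 : OrdGE Φ 2 := ordGE_uS.add hE2
  have hΦreal : barT Φ = Φ := by rw [hΦdef, barT_add, barT_uS, hreal]
  have hΦsub : OrdGE (Φ - uS n) 3 := by
    have h : Φ - uS n = E := by rw [hΦdef]; ring
    rw [h]; exact hE
  set Fz : Fin n → MvPowerSeries (Fin n ⊕ Fin n) ℂ :=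
    fun i => substZW Φ (MvPowerSeries.X (Sum.inl i) + f i) with hFzdef
  set V : (Fin n ⊕ Fin n) → MvPowerSeries (Fin n ⊕ Fin n) ℂ :=
    Sum.elim Fz (fun i => barT (Fz i)) with hVdef
  set D : MvPowerSeries (Fin n ⊕ Fin n) ℂ := φ - barT φ with hDdef
  have hfi2 : ∀ i, OrdGE (substZW Φ (f i)) 2 := fun i => substZW_ordGE hΦ2 _ 2 (hf i)
  have hFzsplit : ∀ i, Fz i = MvPowerSeries.X (Sum.inl i) + substZW Φ (f i) := by
    intro i
    rw [hFzdef]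
    simp only
    rw [substZW_add hΦ2]
    congr 1
    rw [substZW, msubst_X]
    rfl
  have hFz1 : ∀ i, OrdGE (Fz i) 1 := by
    intro i
    rw [hFzsplit i]
    exact (IsHomog.X _).ordGE.add ((hfi2 i).mono (by omega))
  have hVord : ∀ s, OrdGE (V s) 1 := by
    rintro (i | i)
    · exact hFz1 i
    · exact ordGE_barT (hFz1 i)
  have hVshape : ∀ s, ∃ ε, V s = MvPowerSeries.X s + ε ∧ OrdGE ε 2 := by
    rintro (i | i)
    · exact ⟨substZW Φ (f i), hFzsplit i, hfi2 i⟩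
    · refine ⟨barT (substZW Φ (f i)), ?_, ordGE_barT (hfi2 i)⟩
      show barT (Fz i) = _
      rw [hFzsplit i, barT_add, barT_X_inl]
  have EQ1 : Φ + substZW Φ g = (∑ i : Fin n, Fz i * barT (Fz i)) + msubst V φ := by
    have h0 : substZW Φ (MvPowerSeries.X (Sum.inr ()) + g) = Φ + substZW Φ g := by
      rw [substZW_add hΦ2, substZW_X]
    rw [← h0]
    exact htr
  have hbarW : barT (msubst V φ) = msubst V (barT φ) := by
    rw [barT_msubst V hVord φ]
    have hstep2 : (fun s => barT (V s)) = (fun s => V (Equiv.sumComm (Fin n) (Fin n) s)) := by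
      funext s
      cases s with
      | inl i => show barT (Fz i) = barT (Fz i); rfl
      | inr i => show barT (barT (Fz i)) = Fz i; rw [barT_barT]
    rw [hstep2, msubst_swap_eq V hVord (conjC φ)]
    rfl
  have EQ2 : Φ + barT (substZW Φ g)
      = (∑ i : Fin n, Fz i * barT (Fz i)) + msubst V (barT φ) := by
    have := congrArg barT EQ1
    rw [barT_add, hΦreal, barT_add, barT_sum, hbarW] at this
    rw [Finset.sum_congr rfl (fun i _ => by
      rw [barT_mul, barT_barT, mul_comm] : ∀ i ∈ Finset.univ,
        barT (Fz i * barT (Fz i)) = Fz i * barT (Fz i))] at this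
    exact this
  have hNR : substZW Φ g - barT (substZW Φ g) = msubst V D := by
    have h := congrArg₂ (fun (a b : MvPowerSeries (Fin n ⊕ Fin n) ℂ) => a - b) EQ1 EQ2
    rw [hDdef, msubst_sub V hVord]
    have h2 : Φ + substZW Φ g - (Φ + barT (substZW Φ g))
        = substZW Φ g - barT (substZW Φ g) := by ring
    have h3 : (∑ i : Fin n, Fz i * barT (Fz i)) + msubst V φ
        - ((∑ i : Fin n, Fz i * barT (Fz i)) + msubst V (barT φ))
        = msubst V φ - msubst V (barT φ) := by ring
    rw [h2, h3] at h
    exact h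
  -- expansion of D
  set dc : (Fin n →₀ ℕ) → (Fin n →₀ ℕ) → (Fin n →₀ ℕ) → ℂ :=
    fun I J K => c I J K - starRingEnd ℂ (c J I K) with hdcdef
  have hDexp : D = expand dc := by
    rw [hDdef, hφeq, barT_expand, ← expand_sub]
  have hdcvals : ∀ (I : Fin n →₀ ℕ) (k : ℕ), 3 ≤ deg I + 2 * k →
      dc I 0 (Finsupp.single 0 k) = 0 ∧ dc 0 I (Finsupp.single 0 k) = 0 := by
    intro I k h3
    by_cases hI : I = 0
    · subst hI
      have hk : 2 ≤ k := by rw [deg_zero] at h3; omega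
      have h1 := hnorm.1 k hk
      constructor <;> (rw [hdcdef]; simp only; rw [h1]; simp)
    · by_cases hk : k = 0
      · subst hk
        have hdeg : 2 < deg I := by omega
        have h7 := hnorm.2.2.2.2.2.2 I hdeg
        rw [Finsupp.single_zero]
        constructor
        · rw [hdcdef]; simp only; rw [h7, Complex.conj_conj, sub_self]
        · rw [hdcdef]; simp only; rw [h7, sub_self]
      · have h4 := hnorm.2.2.2.1 k (by omega) I hI
        constructor
        · rw [hdcdef]; simp only; rw [h4.1, h4.2]; simp
        · rw [hdcdef]; simp only; rw [h4.2, h4.1]; simp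
  -- the main induction
  have MAIN : ∀ m : ℕ,
      (∀ ν : (Fin n ⊕ Unit) →₀ ℕ, wdeg ν ≤ m → zpart ν ≠ 0 →
        MvPowerSeries.coeff ν g = 0) ∧
      (∀ ν : (Fin n ⊕ Unit) →₀ ℕ, wdeg ν ≤ m →
        starRingEnd ℂ (MvPowerSeries.coeff ν g) = MvPowerSeries.coeff ν g) ∧
      (∀ μ : (Fin n ⊕ Fin n) →₀ ℕ, deg μ ≤ m → MvPowerSeries.coeff μ D = 0) := by
    intro m
    induction m using Nat.strong_induction_on with
    | _ m IH => ?_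
    by_cases hm3 : m < 3
    · refine ⟨?_, ?_, ?_⟩
      · intro ν hν _
        exact hg ν (by omega)
      · intro ν hν
        rw [hg ν (by omega), map_zero]
      · intro μ hμ
        rw [hDdef, map_sub, hφ μ (by omega), ordGE_barT hφ μ (by omega), sub_self]
    · push_neg at hm3
      have IH1 : ∀ ν : (Fin n ⊕ Unit) →₀ ℕ, wdeg ν < m → zpart ν ≠ 0 →
          MvPowerSeries.coeff ν g = 0 := fun ν hν =>
        (IH (m-1) (by omega)).1 ν (by omega)
      have IH2 : ∀ ν : (Fin n ⊕ Unit) →₀ ℕ, wdeg ν < m →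
          starRingEnd ℂ (MvPowerSeries.coeff ν g) = MvPowerSeries.coeff ν g := fun ν hν =>
        (IH (m-1) (by omega)).2.1 ν (by omega)
      have IH3 : ∀ μ : (Fin n ⊕ Fin n) →₀ ℕ, deg μ < m →
          MvPowerSeries.coeff μ D = 0 := fun μ hμ =>
        (IH (m-1) (by omega)).2.2 μ (by omega)
      set Pset : Finset ((Fin n →₀ ℕ) × ℕ) :=
        (Finset.Iic (bnd m) ×ˢ Finset.range (m+1)).filter
          (fun p => deg p.1 + 2 * p.2 = m) with hPsetdef
      -- Step A
      have stepA : ∀ μ : (Fin n ⊕ Fin n) →₀ ℕ, deg μ = m →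
          MvPowerSeries.coeff μ (substZW Φ g - barT (substZW Φ g))
          = ∑ p ∈ Pset,
              (MvPowerSeries.coeff (iota p.1 p.2) g *
                 MvPowerSeries.coeff μ (term p.1 0 (Finsupp.single 0 p.2))
               - starRingEnd ℂ (MvPowerSeries.coeff (iota p.1 p.2) g) *
                 MvPowerSeries.coeff μ (term 0 p.1 (Finsupp.single 0 p.2))) := by
        intro μ hμ
        rw [map_sub, coeff_substZW_pairs hΦ2 g μ, coeff_barT_substZW_pairs hΦ2 hΦreal g μ, hμ,
          ← Finset.sum_sub_distrib, hPsetdef, Finset.sum_filter]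
        apply Finset.sum_congr rfl
        rintro ⟨I, k⟩ hp
        simp only
        by_cases hd : deg I + 2 * k = m
        · rw [if_pos hd]
          have hrepl : ∀ ρ : (Fin n ⊕ Fin n) →₀ ℕ, deg ρ = deg I →
              MvPowerSeries.coeff μ (MvPowerSeries.monomial ρ 1 * Φ ^ k)
              = MvPowerSeries.coeff μ (MvPowerSeries.monomial ρ 1 * uS n ^ k) := by
            intro ρ hρ
            have hdiff : MvPowerSeries.monomial ρ 1 * Φ ^ k
                - MvPowerSeries.monomial ρ 1 * uS n ^ k
                = MvPowerSeries.monomial ρ 1 * (Φ ^ k - uS n ^ k) := by ring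
            have hord : OrdGE (MvPowerSeries.monomial ρ (1:ℂ) * (Φ ^ k - uS n ^ k))
                (deg ρ + (2*k+1)) :=
              (IsHomog.monomial ρ 1).ordGE.mul (pow_sub_pow_ord hΦ2 hΦsub k)
            have h0 : MvPowerSeries.coeff μ
                (MvPowerSeries.monomial ρ 1 * Φ ^ k
                  - MvPowerSeries.monomial ρ 1 * uS n ^ k) = 0 := by
              rw [hdiff]
              exact hord μ (by omega)
            rw [map_sub] at h0
            exact sub_eq_zero.1 h0
          rw [hrepl (zmon I 0) (by rw [deg_zmon, deg_zero, add_zero]),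
            hrepl (zmon 0 I) (by rw [deg_zmon, deg_zero, zero_add]),
            ← term_pure_left, ← term_pure_right]
        · rw [if_neg hd]
          rcases Nat.lt_or_ge (deg I + 2 * k) m with hlt | hge
          · by_cases hI0 : I = 0
            · subst hI0
              rw [IH2 (iota 0 k) (by rw [wdeg_iota, deg_zero]; omega)]
              ring
            · rw [IH1 (iota I k) (by rw [wdeg_iota]; omega) (by rw [zpart_iota]; exact hI0),
                map_zero]
              ring
          · have hgt : m < deg I + 2 * k := by omega
            have h1 : MvPowerSeries.coeff μ
                (MvPowerSeries.monomial (zmon I 0) 1 * Φ ^ k) = 0 := by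
              have := ((IsHomog.monomial (zmon I 0) (1:ℂ)).ordGE.mul (hΦ2.pow k))
              exact this μ (by rw [deg_zmon, deg_zero]; omega)
            have h2 : MvPowerSeries.coeff μ
                (MvPowerSeries.monomial (zmon 0 I) 1 * Φ ^ k) = 0 := by
              have := ((IsHomog.monomial (zmon 0 I) (1:ℂ)).ordGE.mul (hΦ2.pow k))
              exact this μ (by rw [deg_zmon, deg_zero]; omega)
            rw [h1, h2]
            ring
      -- Step B
      have stepB : ∀ μ : (Fin n ⊕ Fin n) →₀ ℕ, deg μ = m →
          MvPowerSeries.coeff μ (msubst V D) = MvPowerSeries.coeff μ D := by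
        intro μ hμ
        rw [coeff_msubst V hVord]
        have hterm : ∀ ν ∈ Finset.Iic (bndF (Fin n ⊕ Fin n) (deg μ)),
            MvPowerSeries.coeff ν D *
              MvPowerSeries.coeff μ (ν.prod fun s k => V s ^ k)
            = if ν = μ then MvPowerSeries.coeff μ D else 0 := by
          intro ν _
          by_cases hνμ : ν = μ
          · subst hνμ
            rw [if_pos rfl]
            obtain ⟨err, heq, horder⟩ := prod_perturb V hVshape ν
            rw [heq, map_add, MvPowerSeries.coeff_monomial, if_pos rfl,
              horder ν (by omega), add_zero, mul_one]
          · rw [if_neg hνμ]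
            rcases lt_trichotomy (deg ν) m with h | h | h
            · rw [IH3 ν (by omega), zero_mul]
            · obtain ⟨err, heq, horder⟩ := prod_perturb V hVshape ν
              rw [heq, map_add, MvPowerSeries.coeff_monomial,
                if_neg (fun hc => hνμ hc.symm), horder μ (by omega), add_zero, mul_zero]
            · have hpp := ordGE_prodpow V (fun _ => 1) (fun s => hVord s) ν
              rw [hpp μ (by
                have hs : (ν.sum fun s k => 1 * k) = deg ν := by simp [deg]
                omega), mul_zero]
        rw [Finset.sum_congr rfl hterm, Finset.sum_ite_eq' _ μ
          (fun _ => MvPowerSeries.coeff μ D),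
          if_pos (Finset.mem_Iic.2 (le_bndF le_rfl))]
      -- characterization of D coefficients at degree m
      have hμD : ∀ μ : (Fin n ⊕ Fin n) →₀ ℕ, deg μ = m →
          MvPowerSeries.coeff μ D
          = ∑ p ∈ Pset,
              (MvPowerSeries.coeff (iota p.1 p.2) g *
                 MvPowerSeries.coeff μ (term p.1 0 (Finsupp.single 0 p.2))
               - starRingEnd ℂ (MvPowerSeries.coeff (iota p.1 p.2) g) *
                 MvPowerSeries.coeff μ (term 0 p.1 (Finsupp.single 0 p.2))) := by
        intro μ hμ
        rw [← stepB μ hμ, ← hNR, stepA μ hμ]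
      -- the two reindexing identities
      have hsumL : ∀ μ : (Fin n ⊕ Fin n) →₀ ℕ,
          (∑ t ∈ Tset n m, (if t.2.1 = 0 ∧ t.2.2 = Finsupp.single 0 (t.2.2 0)
              then MvPowerSeries.coeff (iota t.1 (t.2.2 0)) g else 0)
            * MvPowerSeries.coeff μ (term t.1 t.2.1 t.2.2))
          = ∑ p ∈ Pset, MvPowerSeries.coeff (iota p.1 p.2) g *
              MvPowerSeries.coeff μ (term p.1 0 (Finsupp.single 0 p.2)) := by
        intro μ
        rw [Finset.sum_congr rfl (fun t _ => by
          rw [ite_mul, zero_mul] :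
          ∀ t ∈ Tset n m, _ = if t.2.1 = 0 ∧ t.2.2 = Finsupp.single 0 (t.2.2 0)
            then MvPowerSeries.coeff (iota t.1 (t.2.2 0)) g
              * MvPowerSeries.coeff μ (term t.1 t.2.1 t.2.2) else 0),
          ← Finset.sum_filter]
        refine Finset.sum_nbij' (fun t => (t.1, t.2.2 0))
          (fun p => (p.1, (0 : Fin n →₀ ℕ), Finsupp.single (0 : Fin n) p.2)) ?_ ?_ ?_ ?_ ?_
        · rintro ⟨I', J', K'⟩ ht
          rw [Finset.mem_filter] at ht
          obtain ⟨htd, hJ, hK⟩ := ht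
          rw [mem_Tset, tdeg] at htd
          simp only at htd hJ hK ⊢
          rw [hPsetdef, Finset.mem_filter, Finset.mem_product, Finset.mem_Iic,
            Finset.mem_range]
          have hdK : deg K' = K' 0 := by
            conv_lhs => rw [hK]
            rw [deg_single]
          rw [hJ, deg_zero] at htd
          exact ⟨⟨le_bnd (show deg I' ≤ m by omega), (show K' 0 < m + 1 by omega)⟩,
            (show deg I' + 2 * K' 0 = m by omega)⟩
        · rintro ⟨I', k'⟩ hp
          rw [hPsetdef, Finset.mem_filter, Finset.mem_product] at hp
          obtain ⟨-, hpd⟩ := hp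
          simp only at hpd ⊢
          rw [Finset.mem_filter, mem_Tset, tdeg]
          simp only
          refine ⟨by rw [deg_zero, deg_single]; omega, trivial, by rw [Finsupp.single_eq_same]⟩
        · rintro ⟨I', J', K'⟩ ht
          rw [Finset.mem_filter] at ht
          obtain ⟨-, hJ, hK⟩ := ht
          simp only at hJ hK ⊢
          rw [← hJ, ← hK]
        · rintro ⟨I', k'⟩ _
          simp only
          rw [Finsupp.single_eq_same]
        · rintro ⟨I', J', K'⟩ ht
          rw [Finset.mem_filter] at ht
          obtain ⟨-, hJ, hK⟩ := ht
          simp only at hJ hK ⊢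
          rw [← hJ, ← hK]
      have hsumR : ∀ μ : (Fin n ⊕ Fin n) →₀ ℕ,
          (∑ t ∈ Tset n m, (if t.1 = 0 ∧ t.2.2 = Finsupp.single 0 (t.2.2 0)
              then starRingEnd ℂ (MvPowerSeries.coeff (iota t.2.1 (t.2.2 0)) g) else 0)
            * MvPowerSeries.coeff μ (term t.1 t.2.1 t.2.2))
          = ∑ p ∈ Pset, starRingEnd ℂ (MvPowerSeries.coeff (iota p.1 p.2) g) *
              MvPowerSeries.coeff μ (term 0 p.1 (Finsupp.single 0 p.2)) := by
        intro μ
        rw [Finset.sum_congr rfl (fun t _ => by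
          rw [ite_mul, zero_mul] :
          ∀ t ∈ Tset n m, _ = if t.1 = 0 ∧ t.2.2 = Finsupp.single 0 (t.2.2 0)
            then starRingEnd ℂ (MvPowerSeries.coeff (iota t.2.1 (t.2.2 0)) g)
              * MvPowerSeries.coeff μ (term t.1 t.2.1 t.2.2) else 0),
          ← Finset.sum_filter]
        refine Finset.sum_nbij' (fun t => (t.2.1, t.2.2 0))
          (fun p => ((0 : Fin n →₀ ℕ), p.1, Finsupp.single (0 : Fin n) p.2)) ?_ ?_ ?_ ?_ ?_
        · rintro ⟨I', J', K'⟩ ht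
          rw [Finset.mem_filter] at ht
          obtain ⟨htd, hI, hK⟩ := ht
          rw [mem_Tset, tdeg] at htd
          simp only at htd hI hK ⊢
          rw [hPsetdef, Finset.mem_filter, Finset.mem_product, Finset.mem_Iic,
            Finset.mem_range]
          have hdK : deg K' = K' 0 := by
            conv_lhs => rw [hK]
            rw [deg_single]
          rw [hI, deg_zero] at htd
          exact ⟨⟨le_bnd (show deg J' ≤ m by omega), (show K' 0 < m + 1 by omega)⟩,
            (show deg J' + 2 * K' 0 = m by omega)⟩
        · rintro ⟨I', k'⟩ hp
          rw [hPsetdef, Finset.mem_filter, Finset.mem_product] at hp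
          obtain ⟨-, hpd⟩ := hp
          simp only at hpd ⊢
          rw [Finset.mem_filter, mem_Tset, tdeg]
          simp only
          refine ⟨by rw [deg_zero, deg_single]; omega, trivial, by rw [Finsupp.single_eq_same]⟩
        · rintro ⟨I', J', K'⟩ ht
          rw [Finset.mem_filter] at ht
          obtain ⟨-, hI, hK⟩ := ht
          simp only at hI hK ⊢
          rw [← hI, ← hK]
        · rintro ⟨I', k'⟩ _
          simp only
          rw [Finsupp.single_eq_same]
        · rintro ⟨I', J', K'⟩ ht
          rw [Finset.mem_filter] at ht
          obtain ⟨-, hI, hK⟩ := ht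
          simp only at hI hK ⊢
          rw [← hI, ← hK]
      -- combined coefficient family vanishes where supports overlap
      have hddz : ∀ t : (Fin n →₀ ℕ) × (Fin n →₀ ℕ) × (Fin n →₀ ℕ),
          (∃ l, t.1 l ≠ 0 ∧ t.2.1 l ≠ 0) →
          dc t.1 t.2.1 t.2.2
          - ((if t.2.1 = 0 ∧ t.2.2 = Finsupp.single 0 (t.2.2 0)
              then MvPowerSeries.coeff (iota t.1 (t.2.2 0)) g else 0)
            - (if t.1 = 0 ∧ t.2.2 = Finsupp.single 0 (t.2.2 0)
              then starRingEnd ℂ (MvPowerSeries.coeff (iota t.2.1 (t.2.2 0)) g) else 0)) = 0 := by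
        rintro ⟨I', J', K'⟩ ⟨l, h1, h2⟩
        simp only
        rw [hdcdef]
        simp only
        rw [hsupp I' J' K' ⟨l, h1, h2⟩, hsupp J' I' K' ⟨l, h2, h1⟩,
          if_neg (fun hc : J' = 0 ∧ _ => h2 (by rw [hc.1]; rfl)),
          if_neg (fun hc : I' = 0 ∧ _ => h1 (by rw [hc.1]; rfl))]
        simp
      -- the full sum identity
      have hfull : ∀ μ : (Fin n ⊕ Fin n) →₀ ℕ,
          ∑ t ∈ Tset n m,
            (dc t.1 t.2.1 t.2.2
              - ((if t.2.1 = 0 ∧ t.2.2 = Finsupp.single 0 (t.2.2 0)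
                  then MvPowerSeries.coeff (iota t.1 (t.2.2 0)) g else 0)
                - (if t.1 = 0 ∧ t.2.2 = Finsupp.single 0 (t.2.2 0)
                  then starRingEnd ℂ (MvPowerSeries.coeff (iota t.2.1 (t.2.2 0)) g) else 0)))
            * MvPowerSeries.coeff μ (term t.1 t.2.1 t.2.2) = 0 := by
        intro μ
        by_cases hμm : deg μ = m
        · have e1 : ∀ t ∈ Tset n m,
              (dc t.1 t.2.1 t.2.2
                - ((if t.2.1 = 0 ∧ t.2.2 = Finsupp.single 0 (t.2.2 0)
                    then MvPowerSeries.coeff (iota t.1 (t.2.2 0)) g else 0)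
                  - (if t.1 = 0 ∧ t.2.2 = Finsupp.single 0 (t.2.2 0)
                    then starRingEnd ℂ (MvPowerSeries.coeff (iota t.2.1 (t.2.2 0)) g) else 0)))
              * MvPowerSeries.coeff μ (term t.1 t.2.1 t.2.2)
              = dc t.1 t.2.1 t.2.2 * MvPowerSeries.coeff μ (term t.1 t.2.1 t.2.2)
                - ((if t.2.1 = 0 ∧ t.2.2 = Finsupp.single 0 (t.2.2 0)
                    then MvPowerSeries.coeff (iota t.1 (t.2.2 0)) g else 0)
                      * MvPowerSeries.coeff μ (term t.1 t.2.1 t.2.2)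
                  - (if t.1 = 0 ∧ t.2.2 = Finsupp.single 0 (t.2.2 0)
                    then starRingEnd ℂ (MvPowerSeries.coeff (iota t.2.1 (t.2.2 0)) g) else 0)
                      * MvPowerSeries.coeff μ (term t.1 t.2.1 t.2.2)) := by
            intro t _
            ring
          rw [Finset.sum_congr rfl e1, Finset.sum_sub_distrib, Finset.sum_sub_distrib,
            hsumL μ, hsumR μ]
          have h1 : MvPowerSeries.coeff μ D
              = ∑ t ∈ Tset n m, dc t.1 t.2.1 t.2.2 *
                  MvPowerSeries.coeff μ (term t.1 t.2.1 t.2.2) := by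
            rw [hDexp, coeff_expand, hμm]
          have h2 := hμD μ hμm
          rw [Finset.sum_sub_distrib] at h2
          rw [← h1, h2]
          ring
        · apply Finset.sum_eq_zero
          intro t ht
          rw [homog_term t.1 t.2.1 t.2.2 μ (by
            rw [mem_Tset, tdeg] at ht
            omega), mul_zero]
      -- every combined coefficient vanishes
      have hallzero : ∀ t ∈ Tset n m,
          dc t.1 t.2.1 t.2.2
          = (if t.2.1 = 0 ∧ t.2.2 = Finsupp.single 0 (t.2.2 0)
              then MvPowerSeries.coeff (iota t.1 (t.2.2 0)) g else 0)
            - (if t.1 = 0 ∧ t.2.2 = Finsupp.single 0 (t.2.2 0)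
              then starRingEnd ℂ (MvPowerSeries.coeff (iota t.2.1 (t.2.2 0)) g) else 0) := by
        intro t ht
        rw [← sub_eq_zero]
        by_cases hdisj : ∀ l, t.1 l = 0 ∨ t.2.1 l = 0
        · refine indep ((Tset n m).filter
              (fun t => ∀ l, t.1 l = 0 ∨ t.2.1 l = 0))
            (fun t => dc t.1 t.2.1 t.2.2
              - ((if t.2.1 = 0 ∧ t.2.2 = Finsupp.single 0 (t.2.2 0)
                  then MvPowerSeries.coeff (iota t.1 (t.2.2 0)) g else 0)
                - (if t.1 = 0 ∧ t.2.2 = Finsupp.single 0 (t.2.2 0)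
                  then starRingEnd ℂ (MvPowerSeries.coeff (iota t.2.1 (t.2.2 0)) g) else 0)))
            (fun t' ht' => (Finset.mem_filter.1 ht').2) ?_ t
            (Finset.mem_filter.2 ⟨ht, hdisj⟩)
          intro μ
          rw [Finset.sum_subset (Finset.filter_subset _ _) (fun t' ht' hnt' => by
            have hex : ∃ l, t'.1 l ≠ 0 ∧ t'.2.1 l ≠ 0 := by
              by_contra hno
              push_neg at hno
              exact hnt' (Finset.mem_filter.2 ⟨ht', fun l => by
                rcases Nat.eq_zero_or_pos (t'.1 l) with h | h
                · exact Or.inl h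
                · exact Or.inr (hno l (by omega))⟩)
            have hz' := hddz t' hex
            rw [hz', zero_mul])]
          exact hfull μ
        · push_neg at hdisj
          obtain ⟨l, h1, h2⟩ := hdisj
          exact hddz t ⟨l, h1, h2⟩
      -- conclusions at level m
      have atm1 : ∀ ν : (Fin n ⊕ Unit) →₀ ℕ, wdeg ν = m → zpart ν ≠ 0 →
          MvPowerSeries.coeff ν g = 0 := by
        intro ν hν hz
        have hw := wdeg_eq ν
        have ht : ((zpart ν, (0 : Fin n →₀ ℕ),
            Finsupp.single (0 : Fin n) (ν (Sum.inr ())))) ∈ Tset n m :=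
          mem_Tset.2 (by rw [tdeg]; simp only; rw [deg_single, deg_zero]; omega)
        have h0 := hallzero _ ht
        simp only at h0
        rw [if_pos ⟨trivial, by rw [Finsupp.single_eq_same]⟩,
          if_neg (fun hc : zpart ν = 0 ∧ _ => hz hc.1), sub_zero,
          Finsupp.single_eq_same] at h0
        have hdc := (hdcvals (zpart ν) (ν (Sum.inr ())) (by omega)).1
        rw [hdc] at h0
        have := h0.symm
        rw [iota_zpart ν] at this
        exact this
      have atm2 : ∀ ν : (Fin n ⊕ Unit) →₀ ℕ, wdeg ν = m →
          starRingEnd ℂ (MvPowerSeries.coeff ν g) = MvPowerSeries.coeff ν g := by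
        intro ν hν
        by_cases hz : zpart ν = 0
        · have hw := wdeg_eq ν
          rw [hz, deg_zero] at hw
          have ht : (((0 : Fin n →₀ ℕ), (0 : Fin n →₀ ℕ),
              Finsupp.single (0 : Fin n) (ν (Sum.inr ())))) ∈ Tset n m :=
            mem_Tset.2 (by rw [tdeg]; simp only; rw [deg_single, deg_zero]; omega)
          have h0 := hallzero _ ht
          simp only at h0
          rw [if_pos ⟨trivial, by rw [Finsupp.single_eq_same]⟩,
            if_pos ⟨trivial, by rw [Finsupp.single_eq_same]⟩,
            Finsupp.single_eq_same] at h0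
          have hdc := (hdcvals 0 (ν (Sum.inr ())) (by rw [deg_zero]; omega)).1
          rw [hdc] at h0
          have hν' : iota (0 : Fin n →₀ ℕ) (ν (Sum.inr ())) = ν := by
            rw [← hz, iota_zpart]
          rw [hν'] at h0
          have := sub_eq_zero.1 h0.symm
          exact this.symm
        · rw [atm1 ν hν hz, map_zero]
      have atm3 : ∀ μ : (Fin n ⊕ Fin n) →₀ ℕ, deg μ = m →
          MvPowerSeries.coeff μ D = 0 := by
        intro μ hμ
        rw [hDexp, coeff_expand, hμ]
        apply Finset.sum_eq_zero
        rintro ⟨I', J', K'⟩ ht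
        have h0 := hallzero _ ht
        simp only at h0 ⊢
        rw [h0]
        have htd := mem_Tset.1 ht
        rw [tdeg] at htd
        simp only at htd
        by_cases hL : J' = 0 ∧ K' = Finsupp.single 0 (K' 0)
        · rw [if_pos hL]
          have hKdeg : deg K' = K' 0 := by
            conv_lhs => rw [hL.2]
            rw [deg_single]
          by_cases hI0 : I' = 0
          · rw [if_pos ⟨hI0, hL.2⟩]
            rw [hI0, hL.1]
            have := atm2 (iota (0 : Fin n →₀ ℕ) (K' 0)) (by
              rw [wdeg_iota, deg_zero]
              rw [hI0, hL.1, deg_zero] at htd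
              omega)
            rw [this]
            simp
          · rw [if_neg (fun hc : I' = 0 ∧ _ => hI0 hc.1), sub_zero]
            rw [atm1 (iota I' (K' 0)) (by
              rw [wdeg_iota]
              rw [hL.1, deg_zero] at htd
              omega) (by rw [zpart_iota]; exact hI0), zero_mul]
        · rw [if_neg hL, zero_sub, neg_mul, neg_eq_zero]
          by_cases hR : I' = 0 ∧ K' = Finsupp.single 0 (K' 0)
          · rw [if_pos hR]
            have hJ0 : J' ≠ 0 := fun hc => hL ⟨hc, hR.2⟩
            rw [atm1 (iota J' (K' 0)) (by
              rw [wdeg_iota]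
              have hKdeg : deg K' = K' 0 := by
                conv_lhs => rw [hR.2]
                rw [deg_single]
              rw [hR.1, deg_zero] at htd
              omega) (by rw [zpart_iota]; exact hJ0), map_zero, zero_mul]
          · rw [if_neg hR, zero_mul]
      refine ⟨?_, ?_, ?_⟩
      · intro ν hν hz
        rcases eq_or_lt_of_le hν with he | hl
        · exact atm1 ν he hz
        · exact IH1 ν hl hz
      · intro ν hν
        rcases eq_or_lt_of_le hν with he | hl
        · exact atm2 ν he
        · exact IH2 ν hl
      · intro μ hμ
        rcases eq_or_lt_of_le hμ with he | hl
        · exact atm3 μ he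
        · exact IH3 μ hl
  refine ⟨?_, ?_, ?_⟩
  · intro ν hex
    obtain ⟨i, hi⟩ := hex
    refine (MAIN (wdeg ν)).1 ν le_rfl (fun hc => hi ?_)
    rw [← zpart_apply ν i, hc]
    rfl
  · intro m
    exact (MAIN (wdeg (wPow n m))).2.1 (wPow n m) le_rfl
  · have hD0 : φ - barT φ = 0 := by
      rw [← hDdef]
      ext μ
      rw [(MAIN (deg μ)).2.2 μ le_rfl]
      simp
    exact (sub_eq_zero.1 hD0).symm
end
end
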